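/- arXiv:1210.0031 — 2 statements merged into one kernel-verified Lean document; each statement's English description precedes it below -/
import Mathlib

section
/- There exists a constant α > 0 (one may take α = 2/κ) such that for every s ∈ W^{1,1}_0(I), ‖s‖_{W^{1,1}(I)} ≤ α · sup over nonzero ζ ∈ W^{1,∞}_0(I) of B_Γ[ζ,s]/‖ζ‖_{W^{1,∞}(I)}. -/
open MeasureTheory Real Set Filter Topology

noncomputable section

/-- The unit interval `I = (0,1)`. -/
def UI : Set ℝ := Set.Ioo 0 1

/-- The unit square `Ω = (0,1)²`. -/
def USq : Set (ℝ × ℝ) := (Set.Ioo (0:ℝ) 1) ×ˢ (Set.Ioo (0:ℝ) 1)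

/-- The top boundary `Γ = (0,1) × {1}`. -/
def topGam : Set (ℝ × ℝ) := (Set.Ioo (0:ℝ) 1) ×ˢ ({1} : Set ℝ)

/-- The fixed part of the boundary `Σ = ∂Ω \ Γ`. -/
def sideSig : Set (ℝ × ℝ) := frontier USq \ topGam

/-- A (candidate) Sobolev function on the interval `I`, recorded together with
its weak derivative. -/
structure SobI where
  val : ℝ → ℝ
  dval : ℝ → ℝ

/-- A (candidate) Sobolev function on the square `Ω`, recorded together with
its weak gradient. -/
structure SobO where
  val : ℝ × ℝ → ℝ
  grad : ℝ × ℝ → ℝ × ℝ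

namespace SobI
def add (f g : SobI) : SobI := ⟨fun x => f.val x + g.val x, fun x => f.dval x + g.dval x⟩
def sub (f g : SobI) : SobI := ⟨fun x => f.val x - g.val x, fun x => f.dval x - g.dval x⟩
def smul (f : SobI) (c : ℝ) : SobI := ⟨fun x => c * f.val x, fun x => c * f.dval x⟩
end SobI

namespace SobO
def add (f g : SobO) : SobO := ⟨fun x => f.val x + g.val x, fun x => f.grad x + g.grad x⟩
def sub (f g : SobO) : SobO := ⟨fun x => f.val x - g.val x, fun x => f.grad x - g.grad x⟩
def smul (f : SobO) (c : ℝ) : SobO := ⟨fun x => c * f.val x, fun x => c • f.grad x⟩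
end SobO

/-- Membership in `W^{1,1}_0(I)`: the weak derivative is integrable on `I`,
the function is its primitive, and the boundary values vanish. -/
def MemW110 (f : SobI) : Prop :=
  IntegrableOn f.dval UI ∧
  (∀ x ∈ Set.Icc (0:ℝ) 1, f.val x = ∫ t in (0:ℝ)..x, f.dval t) ∧
  f.val 1 = 0

/-- Membership in `W^{1,∞}_0(I)`: additionally the weak derivative is essentially bounded. -/
def MemW1inf0 (f : SobI) : Prop :=
  MemW110 f ∧ eLpNorm f.dval ⊤ (volume.restrict UI) < ⊤

/-- The (equivalent) `W^{1,1}_0(I)` norm `∫_I |f'|`. -/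
def normW11 (f : SobI) : ℝ := ∫ x in UI, |f.dval x|

/-- The (equivalent, Lipschitz) `W^{1,∞}_0(I)` norm `ess sup_I |f'|`. -/
def normW1inf (f : SobI) : ℝ := (eLpNorm f.dval ⊤ (volume.restrict UI)).toReal

/-- Interior weak gradient on the square `Ω` (tested against smooth functions
compactly supported in `Ω`). -/
def IsWeakGradOn (y : ℝ × ℝ → ℝ) (g : ℝ × ℝ → ℝ × ℝ) : Prop :=
  ∀ φ : ℝ × ℝ → ℝ, ContDiff ℝ (⊤ : ℕ∞) φ → tsupport φ ⊆ USq →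
    ((∫ x in USq, y x * fderiv ℝ φ x (1, 0)) = -∫ x in USq, (g x).1 * φ x) ∧
    ((∫ x in USq, y x * fderiv ℝ φ x (0, 1)) = -∫ x in USq, (g x).2 * φ x)

/-- Weak gradient with zero trace on `∂Ω` (tested against all smooth compactly
supported functions on `ℝ²`; this encodes the vanishing trace). -/
def IsWeakGradZ (y : ℝ × ℝ → ℝ) (g : ℝ × ℝ → ℝ × ℝ) : Prop :=
  ∀ φ : ℝ × ℝ → ℝ, ContDiff ℝ (⊤ : ℕ∞) φ → HasCompactSupport φ →
    ((∫ x in USq, y x * fderiv ℝ φ x (1, 0)) = -∫ x in USq, (g x).1 * φ x) ∧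
    ((∫ x in USq, y x * fderiv ℝ φ x (0, 1)) = -∫ x in USq, (g x).2 * φ x)

/-- Membership in `W^{1,p}(Ω)`. -/
def MemW1p (p : ℝ) (f : SobO) : Prop :=
  IsWeakGradOn f.val f.grad ∧
  MemLp f.val (ENNReal.ofReal p) (volume.restrict USq) ∧
  MemLp f.grad (ENNReal.ofReal p) (volume.restrict USq)

/-- Membership in `W^{1,p}_0(Ω)`. -/
def MemW1p0 (p : ℝ) (f : SobO) : Prop :=
  IsWeakGradZ f.val f.grad ∧
  MemLp f.val (ENNReal.ofReal p) (volume.restrict USq) ∧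
  MemLp f.grad (ENNReal.ofReal p) (volume.restrict USq)

/-- The `W^{1,p}(Ω)` norm. -/
def normW1p (p : ℝ) (f : SobO) : ℝ :=
  (eLpNorm f.val (ENNReal.ofReal p) (volume.restrict USq)).toReal +
  (eLpNorm f.grad (ENNReal.ofReal p) (volume.restrict USq)).toReal

/-- A norm on (2×2)-matrices. -/
def matNorm (M : Fin 2 → Fin 2 → ℝ) : ℝ := max (max |M 0 0| |M 0 1|) (max |M 1 0| |M 1 1|)

/-- The `L^∞(Ω)^{2×2}` norm of a matrix field. -/
def matLinf (M : ℝ × ℝ → Fin 2 → Fin 2 → ℝ) : ℝ :=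
  (eLpNorm (fun x => matNorm (M x)) ⊤ (volume.restrict USq)).toReal

/-- Matrix-vector multiplication for 2×2 matrices acting on `ℝ × ℝ`. -/
def matVec (M : Fin 2 → Fin 2 → ℝ) (w : ℝ × ℝ) : ℝ × ℝ :=
  (M 0 0 * w.1 + M 0 1 * w.2, M 1 0 * w.1 + M 1 1 * w.2)

/-- The dot product on `ℝ × ℝ`. -/
def dot2 (a b : ℝ × ℝ) : ℝ := a.1 * b.1 + a.2 * b.2

/-- The coefficient matrix `A[γ]`. -/
def Amat (γ : SobI) (x : ℝ × ℝ) : Fin 2 → Fin 2 → ℝ :=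
  ![![1 + γ.val x.1, -(γ.dval x.1 * x.2)],
    ![-(γ.dval x.1 * x.2), (1 + (γ.dval x.1 * x.2) ^ 2) / (1 + γ.val x.1)]]

/-- The matrix `A₁[γ] = diag(1, ∂ₐφ(γ, x₂γ'))`, `φ(a,b) = (1+b²)/(1+a)`. -/
def A1mat (γ : SobI) (x : ℝ × ℝ) : Fin 2 → Fin 2 → ℝ :=
  ![![1, 0],
    ![0, -(1 + (γ.dval x.1 * x.2) ^ 2) / (1 + γ.val x.1) ^ 2]]

/-- The matrix `A₂[γ] = [[0,−x₂],[−x₂, x₂ ∂_bφ(γ, x₂γ')]]`. -/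
def A2mat (γ : SobI) (x : ℝ × ℝ) : Fin 2 → Fin 2 → ℝ :=
  ![![0, -x.2],
    ![-x.2, x.2 * (2 * (γ.dval x.1 * x.2) / (1 + γ.val x.1))]]

/-- The first variation `DA[γ][h] = A₁[γ] h + A₂[γ] h'`. -/
def DAmat (γ h : SobI) (x : ℝ × ℝ) : Fin 2 → Fin 2 → ℝ :=
  fun i j => A1mat γ x i j * h.val x.1 + A2mat γ x i j * h.dval x.1

/-- The second variation `D²A[γ][h₁,h₂]`; only the `(2,2)` entry is nonzero. -/
def D2Amat (γ h₁ h₂ : SobI) (x : ℝ × ℝ) : Fin 2 → Fin 2 → ℝ :=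
  ![![0, 0],
    ![0, (2 * (1 + (γ.dval x.1 * x.2) ^ 2) / (1 + γ.val x.1) ^ 3) * (h₂.val x.1 * h₁.val x.1)
        + (-(2 * (γ.dval x.1 * x.2)) / (1 + γ.val x.1) ^ 2) *
            (x.2 * (h₂.val x.1 * h₁.dval x.1 + h₂.dval x.1 * h₁.val x.1))
        + (2 / (1 + γ.val x.1)) * (x.2 ^ 2 * (h₂.dval x.1 * h₁.dval x.1))]]

/-- The bilinear form `B_Γ[γ,ζ] = κ ∫₀¹ γ' ζ'`. -/
def BGam (κ : ℝ) (γ ζ : SobI) : ℝ := κ * ∫ x in UI, γ.dval x * ζ.dval x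

/-- The bilinear form `B_Ω[y,z;M] = ∫_Ω M ∇y · ∇z`. -/
def BOm (y z : SobO) (M : ℝ × ℝ → Fin 2 → Fin 2 → ℝ) : ℝ :=
  ∫ x in USq, dot2 (matVec (M x) (y.grad x)) (z.grad x)

/-- Membership in `L²(I)`. -/
def MemL2I (u : ℝ → ℝ) : Prop := MemLp u 2 (volume.restrict UI)

/-- The `L²(I)` norm. -/
def normL2I (u : ℝ → ℝ) : ℝ := (eLpNorm u 2 (volume.restrict UI)).toReal

/-- The `L²(Ω)` norm. -/
def normL2O (u : ℝ × ℝ → ℝ) : ℝ := (eLpNorm u 2 (volume.restrict USq)).toReal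

/-- The state (gradient) constraint `|γ'| ≤ 1` a.e. on `I`. -/
def StateConstraint (γ : SobI) : Prop := ∀ᵐ x ∂(volume.restrict UI), |γ.dval x| ≤ 1

/-- `α` is an inf-sup constant for `B_Γ` in `W^{1,∞}_0(I) × W^{1,1}_0(I)`. -/
def InfSupGam (κ alp : ℝ) : Prop :=
  ∀ γ : SobI, MemW1inf0 γ →
    normW1inf γ ≤ alp * sSup {r : ℝ | ∃ ζ : SobI, MemW110 ζ ∧ normW11 ζ ≠ 0 ∧
      r = BGam κ γ ζ / normW11 ζ}

/-- `β` is a uniform inf-sup constant for `B_Ω[·,·;A[γ]]` in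
`W^{1,p}_0(Ω) × W^{1,q}_0(Ω)`, over all `γ` satisfying the state constraint. -/
def InfSupOm (bet p q : ℝ) : Prop :=
  ∀ γ : SobI, MemW1inf0 γ → StateConstraint γ →
    ∀ y : SobO, MemW1p0 p y →
      normW1p p y ≤ bet * sSup {r : ℝ | ∃ z : SobO, MemW1p0 q z ∧ normW1p q z ≠ 0 ∧
        r = BOm y z (Amat γ) / normW1p q z}

/-- `C_A` is a uniform bound for `A[γ]`, `DA[γ]`, `D²A[γ]` over all `γ`
satisfying the state constraint. -/
def BoundA (CA : ℝ) : Prop :=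
  ∀ γ : SobI, MemW1inf0 γ → StateConstraint γ →
    matLinf (Amat γ) ≤ CA ∧
    (∀ h : SobI, MemW1inf0 h → normW1inf h = 1 → matLinf (DAmat γ h) ≤ CA) ∧
    (∀ h₁ h₂ : SobI, MemW1inf0 h₁ → MemW1inf0 h₂ → normW1inf h₁ = 1 → normW1inf h₂ = 1 →
      matLinf (D2Amat γ h₁ h₂) ≤ CA)

/-- The extension operator `E : W^{1,1}_0(I) → W^{1,q}(Ω)` with `Eζ = ζ` on `Γ`,
`Eζ = 0` on `Σ` and `‖Eζ‖_{W^{1,q}(Ω)} ≤ C_E ‖ζ‖_{W^{1,1}(I)}`. -/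
def ExtProp (Ext : SobI → SobO) (CE q : ℝ) : Prop :=
  ∀ ζ : SobI, MemW110 ζ →
    MemW1p q (Ext ζ) ∧
    (∀ x₁ ∈ Set.Ioo (0:ℝ) 1, (Ext ζ).val (x₁, 1) = ζ.val x₁) ∧
    (∀ x ∈ sideSig, (Ext ζ).val x = 0) ∧
    normW1p q (Ext ζ) ≤ CE * normW11 ζ

/-- Membership in the closed convex ball `B_v ⊆ W¹`. -/
def MemBv (bet CA p : ℝ) (v : SobO) (γ : SobI) (y : SobO) : Prop :=
  MemW1inf0 γ ∧ MemW1p0 p y ∧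
  normW1p p y ≤ bet * CA * normW1p p v ∧ normW1inf γ ≤ 1

/-- The (equivalent) norm on `W¹ = W^{1,∞}_0(I) × W^{1,p}_0(Ω)`. -/
def normW1 (bet CA p : ℝ) (v : SobO) (γ : SobI) (y : SobO) : ℝ :=
  (1 + bet * CA) * normW1p p v * normW1inf γ + normW1p p y

/-- The weak state system (free boundary problem) for the control `u`. -/
def StateSystem (κ p q : ℝ) (Ext : SobI → SobO) (v : SobO) (u : ℝ → ℝ)
    (γ : SobI) (y : SobO) : Prop :=
  MemW1inf0 γ ∧ MemW1p0 p y ∧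
  (∀ z : SobO, MemW1p0 q z → BOm (y.add v) z (Amat γ) = 0) ∧
  (∀ ζ : SobI, MemW110 ζ →
    BGam κ γ ζ + BOm (y.add v) (Ext ζ) (Amat γ) = ∫ x in UI, u x * ζ.val x)

/-- The bilinear form `D_Ω[(γ,y), w; γ̄, ȳ]` of the linearized system. -/
def DOm (v : SobO) (γ : SobI) (y : SobO) (w : SobO) (γb : SobI) (yb : SobO) : ℝ :=
  BOm y w (Amat γb) + BOm (yb.add v) w (DAmat γb γ)

/-- The linearized system at `(γ̄,ȳ)` with right-hand side `∫₀¹ h ζ`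
(the system characterizing `G_v'(ū)h`). -/
def LinSys (κ p q : ℝ) (Ext : SobI → SobO) (v : SobO) (γb : SobI) (yb : SobO)
    (h : ℝ → ℝ) (γ : SobI) (y : SobO) : Prop :=
  MemW1inf0 γ ∧ MemW1p0 p y ∧
  ∀ (ζ : SobI) (z : SobO), MemW110 ζ → MemW1p0 q z →
    BGam κ γ ζ + DOm v γ y (z.add (Ext ζ)) γb yb = ∫ x in UI, h x * ζ.val x

/-- The linearized system characterizing the second derivative `G_v''(ū)h₁h₂`,
with data the first-order states `(γ₁,y₁)`, `(γ₂,y₂)`. -/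
def SecondSys (κ p q : ℝ) (Ext : SobI → SobO) (v : SobO) (γb : SobI) (yb : SobO)
    (γ₁ : SobI) (y₁ : SobO) (γ₂ : SobI) (y₂ : SobO) (γ : SobI) (y : SobO) : Prop :=
  MemW1inf0 γ ∧ MemW1p0 p y ∧
  ∀ (ζ : SobI) (z : SobO), MemW110 ζ → MemW1p0 q z →
    BGam κ γ ζ + DOm v γ y (z.add (Ext ζ)) γb yb =
      -(BOm y₁ (z.add (Ext ζ)) (DAmat γb γ₂)) - BOm y₂ (z.add (Ext ζ)) (DAmat γb γ₁)
        - BOm (yb.add v) (z.add (Ext ζ)) (D2Amat γb γ₁ γ₂)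

/-- The Gagliardo condition expressing `γ ∈ W^{1+1/q,p}(I)`,
i.e. `γ' ∈ W^{1/q,p}(I)`. -/
def Gagliardo (p q : ℝ) (γ : SobI) : Prop :=
  IntegrableOn
    (fun z : ℝ × ℝ => |γ.dval z.1 - γ.dval z.2| ^ p / |z.1 - z.2| ^ (1 + p / q))
    (UI ×ˢ UI)

/-- The (transformed) cost functional `J(γ,y,u)`. -/
def Jcost (lam : ℝ) (v : SobO) (γd : ℝ → ℝ) (yd : ℝ × ℝ → ℝ)
    (γ : SobI) (y : SobO) (u : ℝ → ℝ) : ℝ :=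
  (1/2) * (∫ x in UI, (γ.val x - γd x) ^ 2) +
  (1/2) * (∫ x in USq, (y.val x + v.val x - yd x) ^ 2 * (1 + γ.val x.1)) +
  (lam/2) * ∫ x in UI, (u x) ^ 2

/-- Membership in the open ball `U` of controls. -/
def MemU (alp θ₁ : ℝ) (u : ℝ → ℝ) : Prop := MemL2I u ∧ normL2I u < θ₁ / alp

/-- Membership in the closed ball `U_ad` of admissible controls. -/
def MemUad (alp θ₁ : ℝ) (u : ℝ → ℝ) : Prop := MemL2I u ∧ normL2I u ≤ θ₁ / (2 * alp)

/-- The convex cone of admissible directions at `u`. -/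
def ConeAt (alp θ₁ : ℝ) (u h : ℝ → ℝ) : Prop :=
  MemL2I h ∧ ∃ t : ℝ, 0 < t ∧ MemUad alp θ₁ (fun x => u x + t * h x)

/-- The source term `f₀[x₁; γ̄, ȳ, r]` of the adjoint boundary equation. -/
def adjf0 (v : SobO) (γd : ℝ → ℝ) (yd : ℝ × ℝ → ℝ) (γb : SobI) (yb : SobO)
    (r : SobO) (x₁ : ℝ) : ℝ :=
  (γb.val x₁ - γd x₁)
  + (1/2) * (∫ x₂ in UI, (yb.val (x₁, x₂) + v.val (x₁, x₂) - yd (x₁, x₂)) ^ 2)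
  - ∫ x₂ in UI, dot2 (matVec (A1mat γb (x₁, x₂)) ((yb.add v).grad (x₁, x₂))) (r.grad (x₁, x₂))

/-- The source term `f₁[x₁; γ̄, ȳ, r]` of the adjoint boundary equation. -/
def adjf1 (v : SobO) (γb : SobI) (yb : SobO) (r : SobO) (x₁ : ℝ) : ℝ :=
  - ∫ x₂ in UI, dot2 (matVec (A2mat γb (x₁, x₂)) ((yb.add v).grad (x₁, x₂))) (r.grad (x₁, x₂))

end

open MeasureTheory Real Set

private lemma measurable_realSign : Measurable Real.sign := by
  unfold Real.sign
  exact Measurable.ite (measurableSet_lt measurable_id measurable_const) measurable_const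
    (Measurable.ite (measurableSet_lt measurable_const measurable_id) measurable_const
      measurable_const)

private lemma realSign_mul_self (x : ℝ) : Real.sign x * x = |x| := by
  rcases lt_trichotomy x 0 with h | h | h
  · rw [Real.sign_of_neg h, abs_of_neg h]; ring
  · simp [h]
  · rw [Real.sign_of_pos h, abs_of_pos h]; ring

private lemma abs_realSign_le (x : ℝ) : |Real.sign x| ≤ 1 := by
  rcases lt_trichotomy x 0 with h | h | h
  · rw [Real.sign_of_neg h]; norm_num
  · simp [h]
  · rw [Real.sign_of_pos h]; norm_num

open scoped ENNReal in
/-- inf-sup condition (2.12b): there exists `α > 0` such that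
for every `s ∈ W^{1,1}_0(I)`,
`‖s‖_{W^{1,1}(I)} ≤ α ⋅ sup_{0 ≠ ζ ∈ W^{1,∞}_0(I)} B_Γ[ζ,s]/‖ζ‖_{W^{1,∞}(I)}`. -/
theorem infsup_BGam_dual (κ : ℝ) (hκ : 0 < κ) :
    ∃ alp : ℝ, 0 < alp ∧ ∀ s : SobI, MemW110 s →
      normW11 s ≤ alp * sSup {r : ℝ | ∃ ζ : SobI, MemW1inf0 ζ ∧ normW1inf ζ ≠ 0 ∧
        r = BGam κ ζ s / normW1inf ζ} := by
  refine ⟨2 / κ, by positivity, ?_⟩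
  intro s hs
  obtain ⟨hInt, hval, h10⟩ := hs
  set S := {r : ℝ | ∃ ζ : SobI, MemW1inf0 ζ ∧ normW1inf ζ ≠ 0 ∧
      r = BGam κ ζ s / normW1inf ζ} with hSdef
  have hvol : volume UI = 1 := by
    simp [UI]
  have hfin : IsFiniteMeasure (volume.restrict UI) :=
    ⟨by rw [Measure.restrict_apply_univ, hvol]; exact ENNReal.one_lt_top⟩
  have habs : IntegrableOn (fun x => |s.dval x|) UI := hInt.abs
  have hNs0 : 0 ≤ normW11 s := integral_nonneg fun x => abs_nonneg _
  -- the mean of s.dval over UI vanishes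
  have hg0 : (∫ x in UI, s.dval x) = 0 := by
    have h := hval 1 (by norm_num)
    rw [h10, intervalIntegral.integral_of_le (by norm_num : (0:ℝ) ≤ 1),
      MeasureTheory.integral_Ioc_eq_integral_Ioo] at h
    exact h.symm
  -- the set S is bounded above by κ * ‖s‖
  have key : ∀ r ∈ S, r ≤ κ * normW11 s := by
    rintro r ⟨ζ, ⟨⟨hζInt, -, -⟩, hζtop⟩, hζN, rfl⟩
    have hNpos : 0 < normW1inf ζ :=
      lt_of_le_of_ne ENNReal.toReal_nonneg (Ne.symm hζN)
    have hbd : ∀ᵐ x ∂(volume.restrict UI), ‖ζ.dval x‖ ≤ normW1inf ζ := by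
      filter_upwards [MeasureTheory.ae_le_eLpNormEssSup (f := ζ.dval)
        (μ := volume.restrict UI)] with x hx
      have h1 : (‖ζ.dval x‖₊ : ℝ≥0∞) ≤ eLpNorm ζ.dval ⊤ (volume.restrict UI) := by
        rw [eLpNorm_exponent_top]; exact hx
      have h2 := ENNReal.toReal_mono hζtop.ne h1
      simpa [normW1inf] using h2
    have hprod : Integrable (fun x => ζ.dval x * s.dval x) (volume.restrict UI) :=
      Integrable.bdd_mul hInt hζInt.aestronglyMeasurable hbd
    have hmono : (∫ x in UI, ζ.dval x * s.dval x)
        ≤ ∫ x in UI, normW1inf ζ * |s.dval x| := by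
      refine integral_mono_ae hprod (habs.const_mul _) ?_
      filter_upwards [hbd] with x hx
      calc ζ.dval x * s.dval x ≤ |ζ.dval x * s.dval x| := le_abs_self _
        _ = |ζ.dval x| * |s.dval x| := abs_mul _ _
        _ ≤ normW1inf ζ * |s.dval x| := by
            have : |ζ.dval x| ≤ normW1inf ζ := by simpa [Real.norm_eq_abs] using hx
            exact mul_le_mul_of_nonneg_right this (abs_nonneg _)
    rw [integral_const_mul] at hmono
    rw [div_le_iff₀ hNpos]
    calc BGam κ ζ s = κ * ∫ x in UI, ζ.dval x * s.dval x := rfl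
      _ ≤ κ * (normW1inf ζ * normW11 s) := mul_le_mul_of_nonneg_left hmono hκ.le
      _ = κ * normW11 s * normW1inf ζ := by ring
  have hbdd : BddAbove S := ⟨κ * normW11 s, fun r hr => key r hr⟩
  rcases eq_or_lt_of_le hNs0 with h0 | hpos
  · -- degenerate case ‖s‖ = 0
    have hgz : (fun x => s.dval x) =ᵐ[volume.restrict UI] 0 := by
      have h := (integral_eq_zero_iff_of_nonneg (fun x => abs_nonneg (s.dval x)) habs).mp h0.symm
      filter_upwards [h] with x hx
      exact abs_eq_zero.mp hx
    have hS0 : ∀ r ∈ S, r = 0 := by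
      rintro r ⟨ζ, hζ, hζN, rfl⟩
      have hz : (∫ x in UI, ζ.dval x * s.dval x) = 0 := by
        rw [integral_congr_ae (g := fun _ => (0:ℝ)) ?_, integral_zero]
        filter_upwards [hgz] with x hx
        simp [hx]
      simp [BGam, hz]
    have hsup : sSup S = 0 := by
      rcases Set.eq_empty_or_nonempty S with hE | hne
      · rw [hE]; exact Real.sSup_empty
      · rw [Set.eq_singleton_iff_nonempty_unique_mem.mpr ⟨hne, hS0⟩]
        exact csSup_singleton 0
    rw [hsup, ← h0]
    norm_num
  · -- main case: test with ζ' = sign(s') - c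
    set c : ℝ := ∫ x in UI, Real.sign (s.dval x) with hc
    set ζ : SobI := ⟨fun x => ∫ t in (0:ℝ)..x, (Real.sign (s.dval t) - c),
      fun x => Real.sign (s.dval x) - c⟩ with hζdef
    have hsgnMeas : AEMeasurable (fun x => Real.sign (s.dval x)) (volume.restrict UI) :=
      measurable_realSign.comp_aemeasurable hInt.aemeasurable
    have hsgnInt : IntegrableOn (fun x => Real.sign (s.dval x)) UI := by
      refine ⟨hsgnMeas.aestronglyMeasurable, ?_⟩
      exact HasFiniteIntegral.of_bounded (C := 1)
        (Eventually.of_forall fun x => by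
          simpa [Real.norm_eq_abs] using abs_realSign_le (s.dval x))
    have hc1 : |c| ≤ 1 := by
      have h := norm_integral_le_of_norm_le_const (μ := volume.restrict UI) (C := 1)
        (f := fun x => Real.sign (s.dval x)) (Eventually.of_forall fun x => by
          simpa [Real.norm_eq_abs] using abs_realSign_le (s.dval x))
      simpa [Real.norm_eq_abs, Measure.restrict_apply_univ, Measure.real, hvol] using h
    have hcInt : IntegrableOn (fun _ : ℝ => c) UI :=
      integrableOn_const (C := c) (by rw [hvol]; exact ENNReal.one_ne_top)
    have hζInt : IntegrableOn ζ.dval UI := hsgnInt.sub hcInt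
    have hζ1 : ζ.val 1 = 0 := by
      show (∫ t in (0:ℝ)..1, (Real.sign (s.dval t) - c)) = 0
      rw [intervalIntegral.integral_of_le (by norm_num : (0:ℝ) ≤ 1),
        MeasureTheory.integral_Ioc_eq_integral_Ioo]
      have : (∫ x in UI, (Real.sign (s.dval x) - c)) = 0 := by
        rw [integral_sub hsgnInt hcInt, MeasureTheory.setIntegral_const, ← hc]
        simp [Measure.real, hvol]
      simpa [UI] using this
    have hMem110 : MemW110 ζ := ⟨hζInt, fun x _ => rfl, hζ1⟩
    have hζbd : ∀ x, ‖ζ.dval x‖ ≤ 2 := by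
      intro x
      show ‖Real.sign (s.dval x) - c‖ ≤ 2
      calc ‖Real.sign (s.dval x) - c‖ ≤ |Real.sign (s.dval x)| + |c| := abs_sub _ _
        _ ≤ 1 + 1 := add_le_add (abs_realSign_le _) hc1
        _ = 2 := by norm_num
    have hζtopLe : eLpNorm ζ.dval ⊤ (volume.restrict UI) ≤ ENNReal.ofReal 2 := by
      have h := eLpNorm_le_of_ae_bound (f := ζ.dval) (p := ⊤) (μ := volume.restrict UI)
        (C := 2) (Eventually.of_forall hζbd)
      simpa using h
    have hζtop : eLpNorm ζ.dval ⊤ (volume.restrict UI) < ⊤ :=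
      lt_of_le_of_lt hζtopLe ENNReal.ofReal_lt_top
    have hMemζ : MemW1inf0 ζ := ⟨hMem110, hζtop⟩
    have hNle2 : normW1inf ζ ≤ 2 := by
      have h := ENNReal.toReal_mono ENNReal.ofReal_ne_top hζtopLe
      rwa [ENNReal.toReal_ofReal (by norm_num : (0:ℝ) ≤ 2)] at h
    have hint2 : (∫ x in UI, ζ.dval x * s.dval x) = normW11 s := by
      have h1 : ∀ x, ζ.dval x * s.dval x = |s.dval x| - c * s.dval x := by
        intro x
        show (Real.sign (s.dval x) - c) * s.dval x = _
        rw [sub_mul, realSign_mul_self]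
      calc (∫ x in UI, ζ.dval x * s.dval x)
          = ∫ x in UI, (|s.dval x| - c * s.dval x) := by simp_rw [h1]
        _ = (∫ x in UI, |s.dval x|) - c * ∫ x in UI, s.dval x := by
            rw [integral_sub habs (hInt.const_mul c), integral_const_mul]
        _ = normW11 s := by rw [hg0]; simp [normW11]
    have hNne : normW1inf ζ ≠ 0 := by
      intro h
      have h0' : eLpNorm ζ.dval ⊤ (volume.restrict UI) = 0 := by
        rcases (ENNReal.toReal_eq_zero_iff _).mp h with h' | h'
        · exact h'
        · exact absurd h' hζtop.ne
      have hz : ζ.dval =ᵐ[volume.restrict UI] 0 :=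
        (eLpNorm_eq_zero_iff hζInt.aestronglyMeasurable (by simp)).mp h0'
      have hz2 : (∫ x in UI, ζ.dval x * s.dval x) = 0 := by
        rw [integral_congr_ae (g := fun _ => (0:ℝ)) ?_, integral_zero]
        filter_upwards [hz] with x hx
        simp [hx]
      rw [hint2] at hz2
      exact hpos.ne' hz2
    have hNpos : 0 < normW1inf ζ := lt_of_le_of_ne ENNReal.toReal_nonneg (Ne.symm hNne)
    have hmemS : BGam κ ζ s / normW1inf ζ ∈ S := ⟨ζ, hMemζ, hNne, rfl⟩
    have hBval : BGam κ ζ s = κ * normW11 s := by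
      show κ * (∫ x in UI, ζ.dval x * s.dval x) = κ * normW11 s
      rw [hint2]
    have h2 : κ * normW11 s / 2 ≤ BGam κ ζ s / normW1inf ζ := by
      rw [hBval]
      gcongr
    have h3 : κ * normW11 s / 2 ≤ sSup S := h2.trans (le_csSup hbdd hmemS)
    calc normW11 s = (2 / κ) * (κ * normW11 s / 2) := by field_simp
      _ ≤ (2 / κ) * sSup S := mul_le_mul_of_nonneg_left h3 (by positivity)
end

section
/- Assume ‖v‖_{W^{1,p}(Ω)} ≤ (1−θ₂)/(αC_EC_A(1+βC_A)²) for some θ₂ ∈ (0,1) and (γ̄,ȳ) ∈ B_v. Then the map T(γ,y) = (T₁(γ,y), T₂(γ,y)) associated with the linearized system is a contraction on all of W¹ with Lipschitz constant 1−θ₂ in the norm ‖·‖_{W¹}. -/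
open MeasureTheory Real Set Filter Topology

open MeasureTheory Real Set

set_option maxHeartbeats 2000000

noncomputable section Aux

open MeasureTheory Real Set
open scoped ENNReal NNReal

private abbrev μI : Measure ℝ := volume.restrict UI
private abbrev μO : Measure (ℝ × ℝ) := volume.restrict USq

lemma measUI : MeasurableSet UI := measurableSet_Ioo
lemma measUSq : MeasurableSet USq := measurableSet_Ioo.prod measurableSet_Ioo

lemma volUI : (volume : Measure ℝ) UI = 1 := by
  simp [UI, Real.volume_Ioo]

lemma volUSq : (volume : Measure (ℝ × ℝ)) USq = 1 := by
  rw [USq, Measure.volume_eq_prod, MeasureTheory.Measure.prod_prod]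
  simp [Real.volume_Ioo]

instance : IsFiniteMeasure μI := by
  constructor
  rw [Measure.restrict_apply_univ, volUI]; exact ENNReal.one_lt_top

instance : IsFiniteMeasure μO := by
  constructor
  rw [Measure.restrict_apply_univ, volUSq]; exact ENNReal.one_lt_top

/-- Lift an a.e. property on `I` to an a.e. property of the first coordinate on `Ω`. -/
lemma ae_fst_USq {P : ℝ → Prop} (h : ∀ᵐ t ∂μI, P t) :
    ∀ᵐ x ∂μO, P x.1 := by
  rw [ae_iff] at h ⊢
  rw [Measure.restrict_apply' measUI] at h
  rw [Measure.restrict_apply' measUSq]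
  have hsub : {x : ℝ × ℝ | ¬P x.1} ∩ USq ⊆ ({a : ℝ | ¬P a} ∩ UI) ×ˢ (univ : Set ℝ) := by
    rintro ⟨a, b⟩ ⟨hP, hab⟩
    exact ⟨⟨hP, hab.1⟩, trivial⟩
  refine measure_mono_null hsub ?_
  rw [Measure.volume_eq_prod, MeasureTheory.Measure.prod_prod, h, zero_mul]

lemma ae_restrict_sub_Icc {P : ℝ → Prop} (h : ∀ᵐ t ∂μI, P t) {s : Set ℝ}
    (hs : s ⊆ Icc (0:ℝ) 1) : ∀ᵐ t ∂(volume.restrict s), P t := by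
  have h1 : ∀ᵐ t ∂(volume.restrict (Icc (0:ℝ) 1)), P t := by
    rwa [show (volume.restrict (Icc (0:ℝ) 1)) = μI from
      (Measure.restrict_congr_set Ioo_ae_eq_Icc).symm]
  exact ae_restrict_of_ae_restrict_of_subset hs h1

lemma dval_ae_bound (γ : SobI) (hγ : MemW1inf0 γ) :
    ∀ᵐ t ∂μI, |γ.dval t| ≤ normW1inf γ := by
  have hne : eLpNormEssSup γ.dval μI ≠ ⊤ := by
    have := hγ.2
    rw [eLpNorm_exponent_top] at this
    exact this.ne
  filter_upwards [ae_le_eLpNormEssSup (f := γ.dval) (μ := μI)] with t ht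
  have : ((‖γ.dval t‖₊ : ℝ≥0∞)).toReal ≤ (eLpNormEssSup γ.dval μI).toReal :=
    ENNReal.toReal_mono hne ht
  simpa [normW1inf, eLpNorm_exponent_top, Real.norm_eq_abs] using this

lemma normW1inf_nonneg (γ : SobI) : 0 ≤ normW1inf γ := ENNReal.toReal_nonneg

lemma normW1p_nonneg (r : ℝ) (y : SobO) : 0 ≤ normW1p r y :=
  add_nonneg ENNReal.toReal_nonneg ENNReal.toReal_nonneg

lemma normW11_nonneg (ζ : SobI) : 0 ≤ normW11 ζ :=
  integral_nonneg fun _ => abs_nonneg _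

lemma W110.intervalIntegrable (γ : SobI) (h : MemW110 γ) {x y : ℝ}
    (hx : x ∈ Icc (0:ℝ) 1) (hy : y ∈ Icc (0:ℝ) 1) (hxy : x ≤ y) :
    IntervalIntegrable γ.dval volume x y := by
  rw [intervalIntegrable_iff_integrableOn_Ioc_of_le hxy]
  rcases eq_or_lt_of_le hxy with rfl | hlt
  · simp
  rw [integrableOn_Ioc_iff_integrableOn_Ioo]
  exact h.1.mono_set (Ioo_subset_Ioo hx.1 hy.2)

lemma val_eq_neg_integral (γ : SobI) (h : MemW110 γ) {x : ℝ} (hx : x ∈ Icc (0:ℝ) 1) :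
    γ.val x = -∫ t in x..(1:ℝ), γ.dval t := by
  have h01 : (0:ℝ) ∈ Icc (0:ℝ) 1 := by norm_num
  have h11 : (1:ℝ) ∈ Icc (0:ℝ) 1 := by norm_num
  have hadd := intervalIntegral.integral_add_adjacent_intervals
    (W110.intervalIntegrable γ h h01 hx hx.1) (W110.intervalIntegrable γ h hx h11 hx.2)
  have hv1 : γ.val 1 = ∫ t in (0:ℝ)..1, γ.dval t := h.2.1 1 h11
  have hvx : γ.val x = ∫ t in (0:ℝ)..x, γ.dval t := h.2.1 x hx
  have h0 : γ.val 1 = 0 := h.2.2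
  linarith [hadd, hv1.symm, hvx]

lemma val_bound (γ : SobI) (h : MemW110 γ) (s : ℝ) (hs0 : 0 ≤ s)
    (hb : ∀ᵐ t ∂μI, |γ.dval t| ≤ s) : ∀ x ∈ Icc (0:ℝ) 1, |γ.val x| ≤ s / 2 := by
  intro x hx
  have key : ∀ a b : ℝ, a ∈ Icc (0:ℝ) 1 → b ∈ Icc (0:ℝ) 1 → a ≤ b →
      |∫ t in a..b, γ.dval t| ≤ s * (b - a) := by
    intro a b ha hb' hab
    have hI : IntegrableOn γ.dval (Ioc a b) := by
      rw [← intervalIntegrable_iff_integrableOn_Ioc_of_le hab]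
      exact W110.intervalIntegrable γ h ha hb' hab
    have haeb : ∀ᵐ t ∂(volume.restrict (Ioc a b)), |γ.dval t| ≤ s :=
      ae_restrict_sub_Icc hb (fun t ht => ⟨le_trans ha.1 (le_of_lt ht.1), le_trans ht.2 hb'.2⟩)
    rw [intervalIntegral.integral_of_le hab]
    calc |∫ t in Ioc a b, γ.dval t| ≤ ∫ t in Ioc a b, |γ.dval t| := by
          simpa [Real.norm_eq_abs] using
            norm_integral_le_integral_norm (μ := volume.restrict (Ioc a b)) γ.dval
      _ ≤ ∫ _t in Ioc a b, s := by
          refine integral_mono_ae hI.abs ?_ haeb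
          exact integrableOn_const measure_Ioc_lt_top.ne
      _ = s * (b - a) := by
          rw [setIntegral_const, Real.volume_real_Ioc_of_le (by linarith), smul_eq_mul]
          ring
  have h01 : (0:ℝ) ∈ Icc (0:ℝ) 1 := by norm_num
  have h11 : (1:ℝ) ∈ Icc (0:ℝ) 1 := by norm_num
  have b1 : |γ.val x| ≤ s * x := by
    rw [h.2.1 x hx]
    simpa using key 0 x h01 hx hx.1
  have b2 : |γ.val x| ≤ s * (1 - x) := by
    rw [val_eq_neg_integral γ h hx, abs_neg]
    exact key x 1 hx h11 hx.2
  rcases le_total x (1/2) with hx2 | hx2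
  · calc |γ.val x| ≤ s * x := b1
      _ ≤ s / 2 := by nlinarith
  · calc |γ.val x| ≤ s * (1 - x) := b2
      _ ≤ s / 2 := by nlinarith

lemma aesm_dvalfst {f : ℝ → ℝ} (hf : AEStronglyMeasurable f μI) :
    AEStronglyMeasurable (fun x : ℝ × ℝ => f x.1) μO := by
  obtain ⟨g, hg, hfg⟩ := hf
  exact ⟨fun x => g x.1, hg.comp_measurable measurable_fst,
    ae_fst_USq (P := fun t => f t = g t) hfg⟩

lemma aesm_valfst (γ : SobI) (h : MemW110 γ) :
    AEStronglyMeasurable (fun x : ℝ × ℝ => γ.val x.1) μO := by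
  have hint : IntegrableOn γ.dval (Icc (0:ℝ) 1) := by
    rw [integrableOn_Icc_iff_integrableOn_Ioo]; exact h.1
  have hcont := intervalIntegral.continuousOn_primitive (f := γ.dval) (a := 0) (b := 1)
    (μ := volume) hint
  have hcomp : ContinuousOn (fun x : ℝ × ℝ => ∫ t in Ioc (0:ℝ) x.1, γ.dval t) USq := by
    refine hcont.comp continuous_fst.continuousOn ?_
    rintro ⟨a, b⟩ hab
    exact ⟨le_of_lt hab.1.1, le_of_lt hab.1.2⟩
  have haesm := hcomp.aestronglyMeasurable (μ := (volume : Measure (ℝ × ℝ))) measUSq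
  refine haesm.congr ?_
  filter_upwards [ae_restrict_mem measUSq] with x hx
  rw [h.2.1 x.1 ⟨le_of_lt hx.1.1, le_of_lt hx.1.2⟩,
    intervalIntegral.integral_of_le (le_of_lt hx.1.1)]

lemma holder_dot2 {p q : ℝ} (hp1 : 1 < p) (hq1 : 0 < q) (hpq : 1/p + 1/q = 1)
    (G H : ℝ × ℝ → ℝ × ℝ) (M : (ℝ × ℝ) → Fin 2 → Fin 2 → ℝ) (C : ℝ) (hC : 0 ≤ C)
    (hG : MemLp G (ENNReal.ofReal p) μO) (hH : MemLp H (ENNReal.ofReal q) μO)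
    (haesm : AEStronglyMeasurable (fun x => dot2 (matVec (M x) (G x)) (H x)) μO)
    (hM : ∀ᵐ x ∂μO, |M x 0 0| + |M x 0 1| + |M x 1 0| + |M x 1 1| ≤ C) :
    IntegrableOn (fun x => dot2 (matVec (M x) (G x)) (H x)) USq ∧
    |∫ x in USq, dot2 (matVec (M x) (G x)) (H x)| ≤
      C * (eLpNorm G (ENNReal.ofReal p) μO).toReal *
        (eLpNorm H (ENNReal.ofReal q) μO).toReal := by
  have hpq' : Real.HolderConjugate p q := Real.holderConjugate_iff.mpr ⟨hp1, by rw [← one_div, ← one_div]; exact hpq⟩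
  set K : ℝ × ℝ → ℝ := fun x => ‖G x‖ * ‖H x‖ with hK
  -- pointwise bound
  have hptwise : ∀ᵐ x ∂μO, |dot2 (matVec (M x) (G x)) (H x)| ≤ C * K x := by
    filter_upwards [hM] with x hMx
    have ha : (0:ℝ) ≤ ‖G x‖ := norm_nonneg _
    have hb : (0:ℝ) ≤ ‖H x‖ := norm_nonneg _
    have hg1 : |(G x).1| ≤ ‖G x‖ := by rw [← Real.norm_eq_abs]; exact norm_fst_le _
    have hg2 : |(G x).2| ≤ ‖G x‖ := by rw [← Real.norm_eq_abs]; exact norm_snd_le _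
    have hh1 : |(H x).1| ≤ ‖H x‖ := by rw [← Real.norm_eq_abs]; exact norm_fst_le _
    have hh2 : |(H x).2| ≤ ‖H x‖ := by rw [← Real.norm_eq_abs]; exact norm_snd_le _
    have habs : ∀ m g h : ℝ, |g| ≤ ‖G x‖ → |h| ≤ ‖H x‖ →
        |m * g * h| ≤ |m| * (‖G x‖ * ‖H x‖) := by
      intro m g h hg hh
      rw [abs_mul, abs_mul, mul_assoc]
      exact mul_le_mul_of_nonneg_left
        (mul_le_mul hg hh (abs_nonneg _) ha) (abs_nonneg _)
    have e1 := habs (M x 0 0) (G x).1 (H x).1 hg1 hh1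
    have e2 := habs (M x 0 1) (G x).2 (H x).1 hg2 hh1
    have e3 := habs (M x 1 0) (G x).1 (H x).2 hg1 hh2
    have e4 := habs (M x 1 1) (G x).2 (H x).2 hg2 hh2
    have hexp : dot2 (matVec (M x) (G x)) (H x) =
        M x 0 0 * (G x).1 * (H x).1 + M x 0 1 * (G x).2 * (H x).1 +
        M x 1 0 * (G x).1 * (H x).2 + M x 1 1 * (G x).2 * (H x).2 := by
      simp only [dot2, matVec]; ring
    rw [hexp]
    have htri : |M x 0 0 * (G x).1 * (H x).1 + M x 0 1 * (G x).2 * (H x).1 +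
        M x 1 0 * (G x).1 * (H x).2 + M x 1 1 * (G x).2 * (H x).2| ≤
        |M x 0 0 * (G x).1 * (H x).1| + |M x 0 1 * (G x).2 * (H x).1| +
        |M x 1 0 * (G x).1 * (H x).2| + |M x 1 1 * (G x).2 * (H x).2| := by
      calc _ ≤ |M x 0 0 * (G x).1 * (H x).1 + M x 0 1 * (G x).2 * (H x).1 +
            M x 1 0 * (G x).1 * (H x).2| + |M x 1 1 * (G x).2 * (H x).2| := abs_add_le _ _
        _ ≤ |M x 0 0 * (G x).1 * (H x).1 + M x 0 1 * (G x).2 * (H x).1| +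
            |M x 1 0 * (G x).1 * (H x).2| + |M x 1 1 * (G x).2 * (H x).2| := by
            gcongr; exact abs_add_le _ _
        _ ≤ _ := by gcongr; exact abs_add_le _ _
    have hsum : (|M x 0 0| + |M x 0 1| + |M x 1 0| + |M x 1 1|) * (‖G x‖ * ‖H x‖) ≤
        C * (‖G x‖ * ‖H x‖) :=
      mul_le_mul_of_nonneg_right hMx (mul_nonneg ha hb)
    calc _ ≤ _ := htri
      _ ≤ (|M x 0 0| + |M x 0 1| + |M x 1 0| + |M x 1 1|) * (‖G x‖ * ‖H x‖) := by
          linarith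
      _ ≤ C * K x := hsum
  -- Integrability of K
  have hKaesm : AEStronglyMeasurable K μO :=
    hG.aestronglyMeasurable.norm.mul hH.aestronglyMeasurable.norm
  have hpq1 : 1 / (1 : ℝ≥0∞) = 1 / ENNReal.ofReal p + 1 / ENNReal.ofReal q := by
    rw [one_div, one_div, one_div, inv_one, ← ENNReal.ofReal_inv_of_pos hpq'.pos,
      ← ENNReal.ofReal_inv_of_pos hq1, ← ENNReal.ofReal_add (by positivity) (by positivity)]
    rw [← one_div, ← one_div, hpq, ENNReal.ofReal_one]
  have hKsnorm : eLpNorm K 1 μO ≤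
      eLpNorm G (ENNReal.ofReal p) μO * eLpNorm H (ENNReal.ofReal q) μO := by
    have hT : ENNReal.HolderTriple (ENNReal.ofReal p) (ENNReal.ofReal q) 1 :=
      ⟨by simpa only [one_div] using hpq1.symm⟩
    have := eLpNorm_le_eLpNorm_mul_eLpNorm'_of_norm (p := ENNReal.ofReal p) (q := ENNReal.ofReal q) (r := 1) hG.aestronglyMeasurable
      hH.aestronglyMeasurable (fun u w => ‖u‖ * ‖w‖) 1 ?_
    · rw [ENNReal.coe_one, one_mul] at this; exact this
    filter_upwards with x
    simp
  have hKint : Integrable K μO := by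
    rw [← memLp_one_iff_integrable]
    exact ⟨hKaesm, lt_of_le_of_lt hKsnorm (ENNReal.mul_lt_top hG.eLpNorm_lt_top
      hH.eLpNorm_lt_top)⟩
  have hint : IntegrableOn (fun x => dot2 (matVec (M x) (G x)) (H x)) USq := by
    refine Integrable.mono' (hKint.const_mul C) haesm ?_
    filter_upwards [hptwise] with x hx
    rwa [Real.norm_eq_abs]
  refine ⟨hint, ?_⟩
  have hKie : ∫ x in USq, K x ≤
      (eLpNorm G (ENNReal.ofReal p) μO).toReal * (eLpNorm H (ENNReal.ofReal q) μO).toReal := by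
    have h1 := integral_mul_norm_le_Lp_mul_Lq (μ := μO) hpq' hG hH
    have hGr : (eLpNorm G (ENNReal.ofReal p) μO).toReal =
        (∫ a in USq, ‖G a‖ ^ p ∂volume) ^ (1 / p) := by
      rw [hG.eLpNorm_eq_integral_rpow_norm (by simp [ENNReal.ofReal_eq_zero]; linarith)
        ENNReal.ofReal_ne_top]
      rw [ENNReal.toReal_ofReal (by positivity)]
      rw [ENNReal.toReal_ofReal (by linarith), one_div]
    have hHr : (eLpNorm H (ENNReal.ofReal q) μO).toReal =
        (∫ a in USq, ‖H a‖ ^ q ∂volume) ^ (1 / q) := by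
      rw [hH.eLpNorm_eq_integral_rpow_norm (by simp [ENNReal.ofReal_eq_zero]; linarith)
        ENNReal.ofReal_ne_top]
      rw [ENNReal.toReal_ofReal (by positivity)]
      rw [ENNReal.toReal_ofReal (by linarith), one_div]
    rw [hGr, hHr]
    exact h1
  calc |∫ x in USq, dot2 (matVec (M x) (G x)) (H x)|
      ≤ ∫ x in USq, |dot2 (matVec (M x) (G x)) (H x)| := by
        simpa [Real.norm_eq_abs] using norm_integral_le_integral_norm (μ := μO)
          (fun x => dot2 (matVec (M x) (G x)) (H x))
    _ ≤ ∫ x in USq, C * K x := integral_mono_ae hint.abs (hKint.const_mul C) hptwise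
    _ = C * ∫ x in USq, K x := integral_const_mul C K
    _ ≤ C * ((eLpNorm G (ENNReal.ofReal p) μO).toReal *
        (eLpNorm H (ENNReal.ofReal q) μO).toReal) := mul_le_mul_of_nonneg_left hKie hC
    _ = _ := by ring

lemma sumAbs_Amat_ae (γb : SobI) (hγW : MemW110 γb) (hd1 : ∀ᵐ t ∂μI, |γb.dval t| ≤ 1) :
    ∀ᵐ x ∂μO, |Amat γb x 0 0| + |Amat γb x 0 1| + |Amat γb x 1 0| + |Amat γb x 1 1|
      ≤ 15/2 := by
  have hval := val_bound γb hγW 1 (by norm_num) hd1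
  filter_upwards [ae_fst_USq (P := fun t => |γb.dval t| ≤ 1) hd1, ae_restrict_mem measUSq]
    with x hd hx
  have hx1 : x.1 ∈ Icc (0:ℝ) 1 := ⟨le_of_lt hx.1.1, le_of_lt hx.1.2⟩
  have hv := hval x.1 hx1
  set v := γb.val x.1 with hvdef
  set d := γb.dval x.1 with hddef
  set t := x.2 with htdef
  have ht0 : 0 ≤ t := le_of_lt hx.2.1
  have ht1 : t ≤ 1 := le_of_lt hx.2.2
  have hv' := abs_le.mp hv
  have hd' := abs_le.mp hd
  have hA00 : Amat γb x 0 0 = 1 + v := by simp [Amat, v, d, t]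
  have hA01 : Amat γb x 0 1 = -(d * t) := by simp [Amat, v, d, t]
  have hA10 : Amat γb x 1 0 = -(d * t) := by simp [Amat, v, d, t]
  have hA11 : Amat γb x 1 1 = (1 + (d * t)^2) / (1 + v) := by simp [Amat, v, d, t]
  rw [hA00, hA01, hA10, hA11]
  have h1 : |1 + v| ≤ 3/2 := by rw [abs_le]; constructor <;> linarith
  have hdt : |d * t| ≤ 1 := by
    rw [abs_mul]
    calc |d| * |t| ≤ 1 * 1 := by
          apply mul_le_mul hd ?_ (abs_nonneg _) zero_le_one
          rw [abs_of_nonneg ht0]; exact ht1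
      _ = 1 := by ring
  have h2 : |-(d * t)| ≤ 1 := by rwa [abs_neg]
  have hden : (1/2 : ℝ) ≤ 1 + v := by linarith
  have hnum0 : (0:ℝ) ≤ 1 + (d * t)^2 := by positivity
  have hnum2 : 1 + (d * t)^2 ≤ 2 := by nlinarith [abs_le.mp hdt]
  have h3 : |(1 + (d * t)^2) / (1 + v)| ≤ 4 := by
    rw [abs_of_nonneg (div_nonneg hnum0 (by linarith))]
    rw [div_le_iff₀ (by linarith)]
    nlinarith
  linarith

set_option maxHeartbeats 1000000 in
lemma sumAbs_DAmat_ae (γb : SobI) (hγW : MemW110 γb) (hd1 : ∀ᵐ t ∂μI, |γb.dval t| ≤ 1)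
    (h : SobI) (hhW : MemW110 h) (s : ℝ) (hs0 : 0 ≤ s) (hds : ∀ᵐ t ∂μI, |h.dval t| ≤ s) :
    ∀ᵐ x ∂μO, |DAmat γb h x 0 0| + |DAmat γb h x 0 1| + |DAmat γb h x 1 0| +
      |DAmat γb h x 1 1| ≤ (21/2) * s := by
  have hval := val_bound γb hγW 1 (by norm_num) hd1
  have hvalh := val_bound h hhW s hs0 hds
  filter_upwards [ae_fst_USq (P := fun t => |γb.dval t| ≤ 1) hd1,
    ae_fst_USq (P := fun t => |h.dval t| ≤ s) hds, ae_restrict_mem measUSq]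
    with x hd hhd hx
  have hx1 : x.1 ∈ Icc (0:ℝ) 1 := ⟨le_of_lt hx.1.1, le_of_lt hx.1.2⟩
  have hv := hval x.1 hx1
  have hhv := hvalh x.1 hx1
  set v := γb.val x.1
  set d := γb.dval x.1
  set w := h.val x.1
  set e := h.dval x.1
  set t := x.2
  have ht0 : 0 ≤ t := le_of_lt hx.2.1
  have ht1 : t ≤ 1 := le_of_lt hx.2.2
  have hv' := abs_le.mp hv
  have hd' := abs_le.mp hd
  have hw' := abs_le.mp hhv
  have he' := abs_le.mp hhd
  have hM00 : DAmat γb h x 0 0 = 1 * w + 0 * e := by simp [DAmat, A1mat, A2mat, v, d, w, e, t]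
  have hM01 : DAmat γb h x 0 1 = 0 * w + -t * e := by simp [DAmat, A1mat, A2mat, v, d, w, e, t]
  have hM10 : DAmat γb h x 1 0 = 0 * w + -t * e := by simp [DAmat, A1mat, A2mat, v, d, w, e, t]
  have hM11 : DAmat γb h x 1 1 =
      -(1 + (d * t)^2) / (1 + v)^2 * w + t * (2 * (d * t) / (1 + v)) * e := by
    simp [DAmat, A1mat, A2mat, v, d, w, e, t]
  rw [hM00, hM01, hM10, hM11]
  have hden : (1/2 : ℝ) ≤ 1 + v := by linarith
  have b1 : |1 * w + 0 * e| ≤ s / 2 := by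
    simpa using hhv
  have b2 : |0 * w + -t * e| ≤ s := by
    have : |0 * w + -t * e| = |t| * |e| := by
      rw [show (0 : ℝ) * w + -t * e = -(t * e) by ring, abs_neg, abs_mul]
    rw [this, abs_of_nonneg ht0]
    calc t * |e| ≤ 1 * s := by
          apply mul_le_mul ht1 hhd (abs_nonneg _) zero_le_one
      _ = s := one_mul s
  have hd2 : d^2 ≤ 1 := by nlinarith [hd'.1, hd'.2]
  have ht2 : t^2 ≤ 1 := by nlinarith
  have hdt2 : (d * t)^2 ≤ 1 := by nlinarith [sq_nonneg d, sq_nonneg t, mul_pow d t 2]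
  have c1 : |-(1 + (d * t)^2) / (1 + v)^2 * w| ≤ 4 * s := by
    rw [abs_mul, abs_div, abs_neg]
    have hnum : |1 + (d * t)^2| ≤ 2 := by rw [abs_of_nonneg (by positivity)]; linarith
    have hdenpos : (0:ℝ) < (1+v)^2 := by positivity
    have hden4 : |((1 + v)^2)| = (1+v)^2 := abs_of_pos hdenpos
    have hq : |1 + (d * t)^2| / |(1 + v)^2| ≤ 8 := by
      rw [hden4, div_le_iff₀ hdenpos]
      nlinarith [hnum, hden, sq_nonneg (1+v), sq_nonneg (1+v-1/2)]
    calc |1 + (d * t)^2| / |(1 + v)^2| * |w| ≤ 8 * (s/2) := by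
          apply mul_le_mul hq hhv (abs_nonneg _) (by norm_num)
      _ = 4 * s := by ring
  have c2 : |t * (2 * (d * t) / (1 + v)) * e| ≤ 4 * s := by
    have h1v : (0:ℝ) < 1 + v := by linarith
    have hdta : |d * t| ≤ 1 := by
      rw [abs_mul]
      calc |d| * |t| ≤ 1 * 1 := by
            apply mul_le_mul hd ?_ (abs_nonneg _) zero_le_one
            rw [abs_of_nonneg ht0]; exact ht1
        _ = 1 := by ring
    rw [abs_mul, abs_mul, abs_div, abs_of_pos h1v, abs_of_nonneg ht0, abs_mul, abs_two]
    have hfrac : 2 * |d * t| / (1 + v) ≤ 4 := by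
      rw [div_le_iff₀ h1v]; linarith
    have hfnn : (0:ℝ) ≤ 2 * |d * t| / (1 + v) := by positivity
    calc t * (2 * |d * t| / (1 + v)) * |e|
        ≤ 1 * 4 * s := by
          have step1 : t * (2 * |d * t| / (1 + v)) ≤ 1 * 4 :=
            mul_le_mul ht1 hfrac hfnn zero_le_one
          exact mul_le_mul step1 hhd (abs_nonneg _) (by norm_num)
      _ = 4 * s := by ring
  have b3 : |-(1 + (d * t)^2) / (1 + v)^2 * w + t * (2 * (d * t) / (1 + v)) * e| ≤ 8 * s :=
    (abs_add_le _ _).trans (by linarith)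
  linarith

lemma aesm_integrand_A (γb : SobI) (hγW : MemW110 γb)
    (G H : ℝ × ℝ → ℝ × ℝ) (hG : AEStronglyMeasurable G μO) (hH : AEStronglyMeasurable H μO) :
    AEStronglyMeasurable (fun x => dot2 (matVec (Amat γb x) (G x)) (H x)) μO := by
  have hv : AEStronglyMeasurable (fun x : ℝ × ℝ => γb.val x.1) μO := aesm_valfst γb hγW
  have hd : AEStronglyMeasurable (fun x : ℝ × ℝ => γb.dval x.1) μO :=
    aesm_dvalfst hγW.1.aestronglyMeasurable
  have hG1 : AEStronglyMeasurable (fun x => (G x).1) μO :=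
    continuous_fst.comp_aestronglyMeasurable hG
  have hG2 : AEStronglyMeasurable (fun x => (G x).2) μO :=
    continuous_snd.comp_aestronglyMeasurable hG
  have hH1 : AEStronglyMeasurable (fun x => (H x).1) μO :=
    continuous_fst.comp_aestronglyMeasurable hH
  have hH2 : AEStronglyMeasurable (fun x => (H x).2) μO :=
    continuous_snd.comp_aestronglyMeasurable hH
  have hsnd : AEStronglyMeasurable (fun x : ℝ × ℝ => x.2) μO :=
    continuous_snd.aestronglyMeasurable
  rw [aestronglyMeasurable_iff_aemeasurable]
  have hv' := hv.aemeasurable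
  have hd' := hd.aemeasurable
  have hG1' := hG1.aemeasurable
  have hG2' := hG2.aemeasurable
  have hH1' := hH1.aemeasurable
  have hH2' := hH2.aemeasurable
  have hsnd' := hsnd.aemeasurable
  simp only [dot2, matVec, Amat, Matrix.cons_val_zero, Matrix.cons_val_one, Matrix.head_cons]
  fun_prop

lemma aesm_integrand_DA (γb : SobI) (hγW : MemW110 γb) (h : SobI) (hhW : MemW110 h)
    (G H : ℝ × ℝ → ℝ × ℝ) (hG : AEStronglyMeasurable G μO) (hH : AEStronglyMeasurable H μO) :
    AEStronglyMeasurable (fun x => dot2 (matVec (DAmat γb h x) (G x)) (H x)) μO := by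
  have hv : AEStronglyMeasurable (fun x : ℝ × ℝ => γb.val x.1) μO := aesm_valfst γb hγW
  have hd : AEStronglyMeasurable (fun x : ℝ × ℝ => γb.dval x.1) μO :=
    aesm_dvalfst hγW.1.aestronglyMeasurable
  have hw : AEStronglyMeasurable (fun x : ℝ × ℝ => h.val x.1) μO := aesm_valfst h hhW
  have he : AEStronglyMeasurable (fun x : ℝ × ℝ => h.dval x.1) μO :=
    aesm_dvalfst hhW.1.aestronglyMeasurable
  have hG1 : AEStronglyMeasurable (fun x => (G x).1) μO :=
    continuous_fst.comp_aestronglyMeasurable hG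
  have hG2 : AEStronglyMeasurable (fun x => (G x).2) μO :=
    continuous_snd.comp_aestronglyMeasurable hG
  have hH1 : AEStronglyMeasurable (fun x => (H x).1) μO :=
    continuous_fst.comp_aestronglyMeasurable hH
  have hH2 : AEStronglyMeasurable (fun x => (H x).2) μO :=
    continuous_snd.comp_aestronglyMeasurable hH
  have hsnd : AEStronglyMeasurable (fun x : ℝ × ℝ => x.2) μO :=
    continuous_snd.aestronglyMeasurable
  rw [aestronglyMeasurable_iff_aemeasurable]
  have hv' := hv.aemeasurable
  have hd' := hd.aemeasurable
  have hw' := hw.aemeasurable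
  have he' := he.aemeasurable
  have hG1' := hG1.aemeasurable
  have hG2' := hG2.aemeasurable
  have hH1' := hH1.aemeasurable
  have hH2' := hH2.aemeasurable
  have hsnd' := hsnd.aemeasurable
  simp only [dot2, matVec, DAmat, A1mat, A2mat, Matrix.cons_val_zero, Matrix.cons_val_one,
    Matrix.head_cons]
  fun_prop

lemma MemW110_sub (f g : SobI) (hf : MemW110 f) (hg : MemW110 g) : MemW110 (f.sub g) := by
  have h01 : (0:ℝ) ∈ Icc (0:ℝ) 1 := by norm_num
  refine ⟨hf.1.sub hg.1, ?_, ?_⟩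
  · intro x hx
    have h1 := hf.2.1 x hx
    have h2 := hg.2.1 x hx
    show f.val x - g.val x = ∫ t in (0:ℝ)..x, (f.dval t - g.dval t)
    rw [h1, h2]
    exact (intervalIntegral.integral_sub (W110.intervalIntegrable f hf h01 hx hx.1)
      (W110.intervalIntegrable g hg h01 hx hx.1)).symm
  · show f.val 1 - g.val 1 = 0
    rw [hf.2.2, hg.2.2]; ring

lemma MemW1inf0_sub (f g : SobI) (hf : MemW1inf0 f) (hg : MemW1inf0 g) :
    MemW1inf0 (f.sub g) := by
  refine ⟨MemW110_sub f g hf.1 hg.1, ?_⟩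
  have hle : eLpNorm (f.sub g).dval ⊤ μI ≤ eLpNorm f.dval ⊤ μI + eLpNorm g.dval ⊤ μI := by
    have : (f.sub g).dval = f.dval - g.dval := rfl
    rw [this]
    exact eLpNorm_sub_le hf.1.1.aestronglyMeasurable hg.1.1.aestronglyMeasurable le_top
  exact lt_of_le_of_lt hle (ENNReal.add_lt_top.mpr ⟨hf.2, hg.2⟩)

lemma memLp_comp1 {F : ℝ × ℝ → ℝ × ℝ} {r : ℝ≥0∞} (hF : MemLp F r μO) :
    MemLp (fun x => (F x).1) r μO := by
  refine MemLp.of_le hF (continuous_fst.comp_aestronglyMeasurable hF.aestronglyMeasurable) ?_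
  filter_upwards with x
  exact norm_fst_le (F x)

lemma memLp_comp2 {F : ℝ × ℝ → ℝ × ℝ} {r : ℝ≥0∞} (hF : MemLp F r μO) :
    MemLp (fun x => (F x).2) r μO := by
  refine MemLp.of_le hF (continuous_snd.comp_aestronglyMeasurable hF.aestronglyMeasurable) ?_
  filter_upwards with x
  exact norm_snd_le (F x)

lemma integrable_lp_mul_bdd {r : ℝ} (hr : 1 ≤ r) (f : ℝ × ℝ → ℝ)
    (hf : MemLp f (ENNReal.ofReal r) μO) (g : ℝ × ℝ → ℝ) (hgc : Continuous g)
    (C : ℝ) (hgb : ∀ x, ‖g x‖ ≤ C) : Integrable (fun x => f x * g x) μO := by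
  have hfint : Integrable f μO :=
    hf.integrable (by rwa [ENNReal.one_le_ofReal])
  have := Integrable.bdd_mul (f := g) (g := f) (c := C) hfint
    hgc.aestronglyMeasurable (ae_of_all _ hgb)
  simpa [mul_comm] using this

lemma MemW1p0_sub {r : ℝ} (hr : 1 ≤ r) (y₁ y₂ : SobO) (h₁ : MemW1p0 r y₁)
    (h₂ : MemW1p0 r y₂) : MemW1p0 r (y₁.sub y₂) := by
  refine ⟨?_, h₁.2.1.sub h₂.2.1, h₁.2.2.sub h₂.2.2⟩
  intro φ hφ hφc
  obtain ⟨A1, B1⟩ := h₁.1 φ hφ hφc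
  obtain ⟨A2, B2⟩ := h₂.1 φ hφ hφc
  -- bounds for φ and its directional derivatives
  obtain ⟨Cφ, hCφ⟩ := hφc.exists_bound_of_continuous hφ.continuous
  have hD : ∀ v : ℝ × ℝ, Continuous (fun x => fderiv ℝ φ x v) ∧
      HasCompactSupport (fun x => fderiv ℝ φ x v) := by
    intro v
    constructor
    · exact (hφ.continuous_fderiv (by simp)).clm_apply continuous_const
    · exact (HasCompactSupport.fderiv (𝕜 := ℝ) hφc).comp_left (g := fun L : (ℝ × ℝ) →L[ℝ] ℝ => L v) rfl
  have hDb : ∀ v : ℝ × ℝ, ∃ C, ∀ x, ‖fderiv ℝ φ x v‖ ≤ C := by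
    intro v
    exact (hD v).2.exists_bound_of_continuous (hD v).1
  have key : ∀ v : ℝ × ℝ, (∀ (w : SobO), MemW1p0 r w →
      Integrable (fun x => w.val x * fderiv ℝ φ x v) μO) := by
    intro v w hw
    obtain ⟨C, hC⟩ := hDb v
    exact integrable_lp_mul_bdd hr w.val hw.2.1 _ (hD v).1 C hC
  have keyg : ∀ (w : SobO), MemW1p0 r w →
      Integrable (fun x => (w.grad x).1 * φ x) μO ∧
      Integrable (fun x => (w.grad x).2 * φ x) μO := by
    intro w hw
    constructor
    · exact integrable_lp_mul_bdd hr _ (memLp_comp1 hw.2.2) φ hφ.continuous Cφ hCφ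
    · exact integrable_lp_mul_bdd hr _ (memLp_comp2 hw.2.2) φ hφ.continuous Cφ hCφ
  constructor
  · have e1 : ∫ x in USq, (y₁.sub y₂).val x * fderiv ℝ φ x (1, 0) =
        (∫ x in USq, y₁.val x * fderiv ℝ φ x (1, 0)) -
        ∫ x in USq, y₂.val x * fderiv ℝ φ x (1, 0) := by
      rw [← integral_sub (key (1,0) y₁ h₁) (key (1,0) y₂ h₂)]
      refine integral_congr_ae (ae_of_all _ fun x => ?_)
      show (y₁.val x - y₂.val x) * _ = _
      ring
    have e2 : ∫ x in USq, ((y₁.sub y₂).grad x).1 * φ x =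
        (∫ x in USq, (y₁.grad x).1 * φ x) - ∫ x in USq, (y₂.grad x).1 * φ x := by
      rw [← integral_sub (keyg y₁ h₁).1 (keyg y₂ h₂).1]
      refine integral_congr_ae (ae_of_all _ fun x => ?_)
      show (y₁.grad x - y₂.grad x).1 * _ = _
      rw [Prod.fst_sub]; ring
    rw [e1, e2, A1, A2]; ring
  · have e1 : ∫ x in USq, (y₁.sub y₂).val x * fderiv ℝ φ x (0, 1) =
        (∫ x in USq, y₁.val x * fderiv ℝ φ x (0, 1)) -
        ∫ x in USq, y₂.val x * fderiv ℝ φ x (0, 1) := by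
      rw [← integral_sub (key (0,1) y₁ h₁) (key (0,1) y₂ h₂)]
      refine integral_congr_ae (ae_of_all _ fun x => ?_)
      show (y₁.val x - y₂.val x) * _ = _
      ring
    have e2 : ∫ x in USq, ((y₁.sub y₂).grad x).2 * φ x =
        (∫ x in USq, (y₁.grad x).2 * φ x) - ∫ x in USq, (y₂.grad x).2 * φ x := by
      rw [← integral_sub (keyg y₁ h₁).2 (keyg y₂ h₂).2]
      refine integral_congr_ae (ae_of_all _ fun x => ?_)
      show (y₁.grad x - y₂.grad x).2 * _ = _
      rw [Prod.snd_sub]; ring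
    rw [e1, e2, B1, B2]; ring

/-- The tent function `-min(x, 1-x)` with derivative `±1`. -/
def wtent : SobI :=
  ⟨fun x => if x ≤ 1/2 then -x else x - 1, fun t => if t ≤ 1/2 then -1 else 1⟩

lemma wtent_dval_meas : Measurable wtent.dval := by
  have : MeasurableSet {t : ℝ | t ≤ 1/2} := measurableSet_Iic
  exact Measurable.ite this measurable_const measurable_const

lemma wtent_abs (t : ℝ) : |wtent.dval t| = 1 := by
  show |if t ≤ 1/2 then (-1:ℝ) else 1| = 1
  split_ifs <;> norm_num

lemma wtent_intInt {a b : ℝ} (hab : a ≤ b) : IntervalIntegrable wtent.dval volume a b := by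
  rw [intervalIntegrable_iff_integrableOn_Ioc_of_le hab]
  refine Integrable.mono' (g := fun _ => (1:ℝ)) ?_ ?_ ?_
  · exact integrableOn_const measure_Ioc_lt_top.ne
  · exact wtent_dval_meas.aestronglyMeasurable
  · exact ae_of_all _ fun t => by rw [Real.norm_eq_abs, wtent_abs]

lemma wtent_prim : ∀ x ∈ Icc (0:ℝ) 1, wtent.val x = ∫ t in (0:ℝ)..x, wtent.dval t := by
  intro x hx
  by_cases hhalf : x ≤ 1/2
  · rw [intervalIntegral.integral_of_le hx.1]
    rw [setIntegral_congr_fun measurableSet_Ioc (g := fun _ => (-1:ℝ))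
      (fun t ht => by show (if t ≤ 1/2 then (-1:ℝ) else 1) = -1; rw [if_pos (le_trans ht.2 hhalf)])]
    rw [setIntegral_const, Real.volume_real_Ioc_of_le (by linarith [hx.1]), smul_eq_mul]
    show (if x ≤ 1/2 then -x else x - 1) = (x - 0) * (-1)
    rw [if_pos hhalf]; ring
  · push_neg at hhalf
    have h2 : (1:ℝ)/2 ≤ x := le_of_lt hhalf
    have hsplit := intervalIntegral.integral_add_adjacent_intervals
      (wtent_intInt (by norm_num : (0:ℝ) ≤ 1/2)) (wtent_intInt h2)
    have hfirst : (∫ t in (0:ℝ)..(1/2:ℝ), wtent.dval t) = -(1/2) := by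
      rw [intervalIntegral.integral_of_le (by norm_num : (0:ℝ) ≤ 1/2)]
      rw [setIntegral_congr_fun measurableSet_Ioc (g := fun _ => (-1:ℝ))
        (fun t ht => by show (if t ≤ 1/2 then (-1:ℝ) else 1) = -1; rw [if_pos ht.2])]
      rw [setIntegral_const, Real.volume_real_Ioc_of_le (by norm_num), smul_eq_mul]
      norm_num
    have hsecond : (∫ t in (1/2:ℝ)..x, wtent.dval t) = x - 1/2 := by
      rw [intervalIntegral.integral_of_le h2]
      rw [setIntegral_congr_fun measurableSet_Ioc (g := fun _ => (1:ℝ))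
        (fun t ht => by show (if t ≤ 1/2 then (-1:ℝ) else 1) = 1; rw [if_neg (not_le.mpr ht.1)])]
      rw [setIntegral_const, Real.volume_real_Ioc_of_le (by linarith), smul_eq_mul]
      ring
    rw [← hsplit, hfirst, hsecond]
    show (if x ≤ 1/2 then -x else x - 1) = _
    rw [if_neg (not_le.mpr hhalf)]; ring

lemma wtent_memW110 : MemW110 wtent := by
  refine ⟨?_, wtent_prim, ?_⟩
  · have := (intervalIntegrable_iff_integrableOn_Ioc_of_le (by norm_num : (0:ℝ) ≤ 1)).mp
      (wtent_intInt (by norm_num))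
    exact this.mono_set Ioo_subset_Ioc_self
  · show (if (1:ℝ) ≤ 1/2 then -(1:ℝ) else 1 - 1) = 0
    rw [if_neg (by norm_num)]; ring

lemma wtent_eLp : eLpNorm wtent.dval ⊤ μI = 1 := by
  rw [eLpNorm_exponent_top]
  apply le_antisymm
  · calc eLpNormEssSup wtent.dval μI ≤ ENNReal.ofReal 1 :=
        eLpNormEssSup_le_of_ae_bound (ae_of_all _ fun t => by
          rw [Real.norm_eq_abs, wtent_abs])
      _ = 1 := ENNReal.ofReal_one
  · have hne : μI ≠ 0 := by
      intro hcon
      have := congrArg (fun m : Measure ℝ => m univ) hcon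
      simp only [Measure.restrict_apply_univ, Measure.coe_zero, Pi.zero_apply] at this
      rw [volUI] at this
      exact one_ne_zero this
    have : Filter.NeBot (ae μI) := ae_neBot.mpr hne
    obtain ⟨t, ht⟩ := (ae_le_eLpNormEssSup (f := wtent.dval) (μ := μI)).exists
    have h1 : ‖wtent.dval t‖ₑ = 1 := by
      rw [← ofReal_norm, Real.norm_eq_abs, wtent_abs, ENNReal.ofReal_one]
    rwa [h1] at ht

lemma wtent_memW1inf0 : MemW1inf0 wtent :=
  ⟨wtent_memW110, by rw [wtent_eLp]; exact ENNReal.one_lt_top⟩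

lemma wtent_state : StateConstraint wtent :=
  ae_of_all _ fun t => le_of_eq (wtent_abs t)

lemma wtent_norm : normW1inf wtent = 1 := by
  rw [normW1inf, wtent_eLp, ENNReal.toReal_one]

private lemma div_mul_abs_le {x y z X Y Z : ℝ} (hx : |x| ≤ X) (hy : Y ≤ |y|) (hz : |z| ≤ Z)
    (hY : 0 < Y) : |x / y * z| ≤ X / Y * Z := by
  have hX : 0 ≤ X := le_trans (abs_nonneg _) hx
  rw [abs_mul, abs_div]
  have h1 : |x| / |y| ≤ X / Y := div_le_div₀ hX hx hY hy
  exact mul_le_mul h1 hz (abs_nonneg _) (by positivity)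

private lemma le_div_mul' {c x y z : ℝ} (hy : 0 < y) (h : c * y ≤ x * z) : c ≤ x / y * z := by
  rw [div_mul_eq_mul_div, le_div_iff₀ hy]; exact h

lemma wtent_val_range : ∀ s ∈ Icc (0:ℝ) 1, -(1/2) ≤ wtent.val s ∧ wtent.val s ≤ 0 := by
  intro s hs
  show -(1/2) ≤ (if s ≤ 1/2 then -s else s - 1) ∧ (if s ≤ 1/2 then -s else s - 1) ≤ 0
  split_ifs with h
  · constructor <;> linarith [hs.1]
  · push_neg at h
    constructor <;> linarith [hs.2]

set_option maxHeartbeats 1000000 in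
lemma CA_ge (CA : ℝ) (hB : BoundA CA) : 21/2 ≤ CA := by
  have h := (hB wtent wtent_memW1inf0 wtent_state).2.2 wtent wtent
    wtent_memW1inf0 wtent_memW1inf0 wtent_norm wtent_norm
  set f : ℝ × ℝ → ℝ := fun x => matNorm (D2Amat wtent wtent wtent x) with hfdef
  -- reduce matNorm to the (1,1) entry
  have hf : ∀ x : ℝ × ℝ, f x = |D2Amat wtent wtent wtent x 1 1| := by
    intro x
    have h00 : D2Amat wtent wtent wtent x 0 0 = 0 := by simp [D2Amat]
    have h01 : D2Amat wtent wtent wtent x 0 1 = 0 := by simp [D2Amat]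
    have h10 : D2Amat wtent wtent wtent x 1 0 = 0 := by simp [D2Amat]
    rw [hfdef]
    show matNorm (D2Amat wtent wtent wtent x) = _
    rw [matNorm, h00, h01, h10, abs_zero, max_self]
    rw [max_eq_right (le_max_left 0 _), max_eq_right (abs_nonneg _)]
  -- upper bound 20 on USq
  have hupper : ∀ x ∈ USq, ‖f x‖ ≤ 20 := by
    intro x hx
    have hx1 : x.1 ∈ Icc (0:ℝ) 1 := ⟨le_of_lt hx.1.1, le_of_lt hx.1.2⟩
    obtain ⟨hv1, hv2⟩ := wtent_val_range x.1 hx1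
    have hdabs := wtent_abs x.1
    set a := wtent.val x.1
    set d := wtent.dval x.1
    set t := x.2
    have ht0 : 0 ≤ t := le_of_lt hx.2.1
    have ht1 : t ≤ 1 := le_of_lt hx.2.2
    have hu : (1/2:ℝ) ≤ 1 + a := by linarith
    have haabs : |a| ≤ 1/2 := abs_le.mpr ⟨by linarith, by linarith⟩
    have htabs : |t| ≤ 1 := abs_le.mpr ⟨by linarith, by linarith⟩
    have hd2 : d^2 = 1 := by
      have h1 := sq_abs d
      rw [hdabs] at h1
      linarith [h1]
    have hE : D2Amat wtent wtent wtent x 1 1 =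
        2 * (1 + (d * t)^2) / (1 + a)^3 * (a * a) +
        -(2 * (d * t)) / (1 + a)^2 * (t * (a * d + d * a)) +
        2 / (1 + a) * (t^2 * (d * d)) := by
      simp [D2Amat, a, d, t]
    rw [Real.norm_eq_abs, hf x, abs_abs, hE]
    have hT1 : |2 * (1 + (d * t)^2) / (1 + a)^3 * (a * a)| ≤ 8 := by
      have hb := div_mul_abs_le (x := 2 * (1 + (d * t)^2)) (y := (1 + a)^3) (z := a * a)
        (X := 4) (Y := 1/8) (Z := 1/4)
        (by rw [abs_of_nonneg (by positivity)]
            have hdt : (d * t)^2 = t^2 := by rw [mul_pow, hd2, one_mul]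
            rw [hdt]; nlinarith)
        (by rw [abs_of_nonneg (by positivity)]; nlinarith)
        (by rw [abs_mul]
            calc |a| * |a| ≤ (1/2) * (1/2) :=
                mul_le_mul haabs haabs (abs_nonneg _) (by norm_num)
              _ = 1/4 := by norm_num)
        (by norm_num)
      calc |2 * (1 + (d * t)^2) / (1 + a)^3 * (a * a)| ≤ 4 / (1/8) * (1/4) := hb
        _ = 8 := by norm_num
    have hT2 : |-(2 * (d * t)) / (1 + a)^2 * (t * (a * d + d * a))| ≤ 8 := by
      have hb := div_mul_abs_le (x := -(2 * (d * t))) (y := (1 + a)^2) (z := t * (a * d + d * a))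
        (X := 2) (Y := 1/4) (Z := 1)
        (by rw [abs_neg, abs_mul, abs_mul, abs_two, hdabs]
            nlinarith [abs_nonneg t])
        (by rw [abs_of_nonneg (by positivity)]; nlinarith)
        (by have : t * (a * d + d * a) = 2 * (t * (a * d)) := by ring
            rw [this, abs_mul, abs_mul, abs_mul, abs_two, hdabs]
            nlinarith [abs_nonneg t, abs_nonneg a])
        (by norm_num)
      calc |-(2 * (d * t)) / (1 + a)^2 * (t * (a * d + d * a))| ≤ 2 / (1/4) * 1 := hb
        _ = 8 := by norm_num
    have hT3 : |2 / (1 + a) * (t^2 * (d * d))| ≤ 4 := by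
      have hb := div_mul_abs_le (x := (2:ℝ)) (y := 1 + a) (z := t^2 * (d * d))
        (X := 2) (Y := 1/2) (Z := 1)
        (by rw [abs_two])
        (by rw [abs_of_nonneg (by linarith)]; exact hu)
        (by have hdd : d * d = 1 := by nlinarith [hd2]
            rw [hdd, mul_one, abs_of_nonneg (sq_nonneg t)]
            nlinarith)
        (by norm_num)
      calc |2 / (1 + a) * (t^2 * (d * d))| ≤ 2 / (1/2) * 1 := hb
        _ = 4 := by norm_num
    calc |2 * (1 + (d * t)^2) / (1 + a)^3 * (a * a) +
        -(2 * (d * t)) / (1 + a)^2 * (t * (a * d + d * a)) +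
        2 / (1 + a) * (t^2 * (d * d))|
        ≤ |2 * (1 + (d * t)^2) / (1 + a)^3 * (a * a) +
          -(2 * (d * t)) / (1 + a)^2 * (t * (a * d + d * a))| +
          |2 / (1 + a) * (t^2 * (d * d))| := abs_add_le _ _
      _ ≤ (|2 * (1 + (d * t)^2) / (1 + a)^3 * (a * a)| +
          |-(2 * (d * t)) / (1 + a)^2 * (t * (a * d + d * a))|) +
          |2 / (1 + a) * (t^2 * (d * d))| := by gcongr; exact abs_add_le _ _
      _ ≤ 20 := by linarith
  -- lower bound 21/2 on the region R
  set R : Set (ℝ × ℝ) := Ioo (9/20 : ℝ) (1/2) ×ˢ Ioo (19/20 : ℝ) 1 with hRdef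
  have hRsub : R ⊆ USq := fun x hx =>
    ⟨⟨lt_trans (by norm_num) hx.1.1, lt_trans hx.1.2 (by norm_num)⟩,
     ⟨lt_trans (by norm_num) hx.2.1, hx.2.2⟩⟩
  have hRlower : ∀ x ∈ R, (21/2 : ℝ) ≤ f x := by
    rintro ⟨a, b⟩ ⟨ha, hb⟩
    have ha1 : (9/20 : ℝ) < a := ha.1
    have ha2 : a < 1/2 := ha.2
    have hb1 : (19/20 : ℝ) < b := hb.1
    have hb2 : b < 1 := hb.2
    have hvala : wtent.val a = -a := by
      show (if a ≤ 1/2 then -a else a - 1) = -a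
      rw [if_pos (le_of_lt ha2)]
    have hdvala : wtent.dval a = -1 := by
      show (if a ≤ 1/2 then (-1:ℝ) else 1) = -1
      rw [if_pos (le_of_lt ha2)]
    have hE : D2Amat wtent wtent wtent (a, b) 1 1 =
        2 * (1 + b^2) / (1 - a)^3 * a^2 +
        2 * b / (1 - a)^2 * (b * (2 * a)) +
        2 / (1 - a) * b^2 := by
      have h0 : D2Amat wtent wtent wtent (a, b) 1 1 =
          2 * (1 + (wtent.dval a * b)^2) / (1 + wtent.val a)^3 * (wtent.val a * wtent.val a) +
          -(2 * (wtent.dval a * b)) / (1 + wtent.val a)^2 *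
            (b * (wtent.val a * wtent.dval a + wtent.dval a * wtent.val a)) +
          2 / (1 + wtent.val a) * (b^2 * (wtent.dval a * wtent.dval a)) := by
        simp [D2Amat]
      rw [h0, hvala, hdvala]
      have h1a : 1 + -a = 1 - a := by ring
      rw [h1a]
      ring
    have hu1 : (1/2 : ℝ) < 1 - a := by linarith
    have hu2 : (1 - a) < 11/20 := by linarith
    have hu0 : (0:ℝ) < 1 - a := by linarith
    have hb2' : (361/400 : ℝ) < b^2 := by nlinarith
    have ha2' : (81/400 : ℝ) < a^2 := by nlinarith
    have hcube : (1 - a)^3 < 1331/8000 := by nlinarith [sq_nonneg (1-a)]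
    have hsq : (1 - a)^2 < 121/400 := by nlinarith
    have hT1 : (4:ℝ) ≤ 2 * (1 + b^2) / (1 - a)^3 * a^2 := by
      refine le_div_mul' (by positivity) ?_
      have k1 : (761/200 : ℝ) ≤ 2 * (1 + b^2) := by linarith
      have k2 : (81/400 : ℝ) ≤ a^2 := le_of_lt ha2'
      have := mul_le_mul k1 k2 (by norm_num) (by linarith)
      nlinarith
    have hT2 : (5:ℝ) ≤ 2 * b / (1 - a)^2 * (b * (2 * a)) := by
      refine le_div_mul' (by positivity) ?_
      have k1 : (19/10 : ℝ) ≤ 2 * b := by linarith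
      have k2 : (171/200 : ℝ) ≤ b * (2 * a) := by nlinarith
      have := mul_le_mul k1 k2 (by norm_num) (by linarith)
      nlinarith
    have hT3 : (3:ℝ) ≤ 2 / (1 - a) * b^2 := by
      refine le_div_mul' hu0 ?_
      nlinarith
    have hEpos : (21/2:ℝ) ≤ D2Amat wtent wtent wtent (a, b) 1 1 := by
      rw [hE]; linarith
    rw [hf (a, b)]
    exact le_trans hEpos (le_abs_self _)
  -- conclude via essential supremum
  have hess_ne_top : eLpNormEssSup f μO ≠ ⊤ := by
    have hb : eLpNormEssSup f μO ≤ ENNReal.ofReal 20 := by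
      refine eLpNormEssSup_le_of_ae_bound ?_
      filter_upwards [ae_restrict_mem measUSq] with x hx
      exact hupper x hx
    exact (lt_of_le_of_lt hb ENNReal.ofReal_lt_top).ne
  have hlow : ENNReal.ofReal (21/2) ≤ eLpNormEssSup f μO := by
    by_contra hcon
    push_neg at hcon
    have hae := ae_le_eLpNormEssSup (f := f) (μ := μO)
    rw [ae_iff] at hae
    have hRbad : R ⊆ {x | ¬ ‖f x‖ₑ ≤ eLpNormEssSup f μO} := by
      intro x hxR
      simp only [mem_setOf_eq, not_le]
      have h1 : ENNReal.ofReal (21/2) ≤ ‖f x‖ₑ := by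
        rw [← ofReal_norm]
        refine ENNReal.ofReal_le_ofReal ?_
        rw [Real.norm_eq_abs]
        exact le_trans (hRlower x hxR) (le_abs_self _)
      exact lt_of_lt_of_le hcon h1
    have hR0 : μO R = 0 := measure_mono_null hRbad hae
    have hRvol : μO R = ENNReal.ofReal (1/20) * ENNReal.ofReal (1/20) := by
      rw [Measure.restrict_apply' measUSq, inter_eq_self_of_subset_left hRsub, hRdef,
        Measure.volume_eq_prod, Measure.prod_prod, Real.volume_Ioo, Real.volume_Ioo]
      norm_num
    rw [hRvol] at hR0
    rcases mul_eq_zero.mp hR0 with h' | h' <;>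
      (rw [ENNReal.ofReal_eq_zero] at h'; norm_num at h')
  have hfin : (21/2 : ℝ) ≤ matLinf (D2Amat wtent wtent wtent) := by
    rw [matLinf, eLpNorm_exponent_top]
    calc (21/2 : ℝ) = (ENNReal.ofReal (21/2)).toReal := by
          rw [ENNReal.toReal_ofReal]; norm_num
      _ ≤ (eLpNormEssSup f μO).toReal := ENNReal.toReal_mono hess_ne_top hlow
  linarith [hfin, h]

end Aux

/-- Theorem 3.14, the linearized fixed-point map is a
contraction: assume the `θ₂`-smallness condition on `v` and `(γ̄,ȳ) ∈ B_v`.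
Then the map `T = (T₁,T₂)` associated with the linearized system (for given
functionals `F_Ω`, `F_Γ`) is a contraction on all of `W¹` with constant
`1 − θ₂` in the `‖·‖_{W¹}` norm. -/
theorem linearized_T_contraction
    (κ p q : ℝ) (hκ : 0 < κ) (hp : 2 < p) (hq : 1 < q) (hpq : 1/p + 1/q = 1)
    (Ext : SobI → SobO) (CE : ℝ) (hCE : 1 ≤ CE) (hExt : ExtProp Ext CE q)
    (alp bet CA : ℝ) (halp : 0 < alp) (hbet : 0 < bet) (hCA : 0 < CA)
    (hInfSupGam : InfSupGam κ alp) (hInfSupOm : InfSupOm bet p q) (hBoundA : BoundA CA)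
    (v : SobO) (hv : MemW1p p v)
    (θ₂ : ℝ) (hθ₂l : 0 < θ₂) (hθ₂u : θ₂ < 1)
    (hv2 : normW1p p v ≤ (1 - θ₂) / (alp * CE * CA * (1 + bet * CA) ^ 2))
    (γb : SobI) (yb : SobO) (hBv : MemBv bet CA p v γb yb)
    (FO : SobO → ℝ) (FG : SobI → ℝ)
    (hFOadd : ∀ w₁ w₂ : SobO, FO (w₁.add w₂) = FO w₁ + FO w₂)
    (hFOsmul : ∀ (c : ℝ) (w : SobO), FO (w.smul c) = c * FO w)
    (hFGadd : ∀ ζ₁ ζ₂ : SobI, FG (ζ₁.add ζ₂) = FG ζ₁ + FG ζ₂)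
    (hFGsmul : ∀ (c : ℝ) (ζ : SobI), FG (ζ.smul c) = c * FG ζ)
    (CFO CFG : ℝ) (hCFO : 0 ≤ CFO) (hCFG : 0 ≤ CFG)
    (hFObdd : ∀ w : SobO, MemW1p q w → |FO w| ≤ CFO * normW1p q w)
    (hFGbdd : ∀ ζ : SobI, MemW110 ζ → |FG ζ| ≤ CFG * normW11 ζ)
    :
    ∀ (γ₁ γ₂ : SobI) (y₁ y₂ : SobO),
      MemW1inf0 γ₁ → MemW1inf0 γ₂ → MemW1p0 p y₁ → MemW1p0 p y₂ →
      ∀ (γh₁ γh₂ : SobI) (yh₁ yh₂ : SobO),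
        MemW1inf0 γh₁ → MemW1inf0 γh₂ → MemW1p0 p yh₁ → MemW1p0 p yh₂ →
        (∀ ζ : SobI, MemW110 ζ →
          BGam κ γh₁ ζ = -(DOm v γ₁ y₁ (Ext ζ) γb yb) + FO (Ext ζ) + FG ζ) →
        (∀ ζ : SobI, MemW110 ζ →
          BGam κ γh₂ ζ = -(DOm v γ₂ y₂ (Ext ζ) γb yb) + FO (Ext ζ) + FG ζ) →
        (∀ z : SobO, MemW1p0 q z →
          BOm yh₁ z (Amat γb) = -(BOm (yb.add v) z (DAmat γb γh₁)) + FO z) →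
        (∀ z : SobO, MemW1p0 q z →
          BOm yh₂ z (Amat γb) = -(BOm (yb.add v) z (DAmat γb γh₂)) + FO z) →
        normW1 bet CA p v (γh₁.sub γh₂) (yh₁.sub yh₂) ≤
          (1 - θ₂) * normW1 bet CA p v (γ₁.sub γ₂) (y₁.sub y₂) := by
  intro γ₁ γ₂ y₁ y₂ hγ₁ hγ₂ hy₁ hy₂ γh₁ γh₂ yh₁ yh₂ hγh₁ hγh₂ hyh₁ hyh₂ hT11 hT12 hT21 hT22
  obtain ⟨hγbW, hybW, hybnorm, hγbnorm⟩ := hBv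
  have hp1 : (1:ℝ) ≤ p := by linarith
  have hq0 : (0:ℝ) < q := by linarith
  have hCE0 : (0:ℝ) < CE := lt_of_lt_of_le zero_lt_one hCE
  set δγ := γ₁.sub γ₂ with hδγdef
  set δy := y₁.sub y₂ with hδydef
  set δγh := γh₁.sub γh₂ with hδγhdef
  set δyh := yh₁.sub yh₂ with hδyhdef
  have hδγ : MemW1inf0 δγ := MemW1inf0_sub _ _ hγ₁ hγ₂
  have hδγh : MemW1inf0 δγh := MemW1inf0_sub _ _ hγh₁ hγh₂
  have hδy : MemW1p0 p δy := MemW1p0_sub hp1 _ _ hy₁ hy₂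
  have hδyh : MemW1p0 p δyh := MemW1p0_sub hp1 _ _ hyh₁ hyh₂
  have hγbd1 : ∀ᵐ t ∂μI, |γb.dval t| ≤ 1 :=
    (dval_ae_bound γb hγbW).mono fun t ht => le_trans ht hγbnorm
  have hγbState : StateConstraint γb := hγbd1
  have hCA21 : (21/2 : ℝ) ≤ CA := CA_ge CA hBoundA
  set V := normW1p p v with hVdef
  have hV0 : 0 ≤ V := normW1p_nonneg _ _
  set N := normW1 bet CA p v δγ δy with hNdef
  have hN' : N = (1 + bet * CA) * V * normW1inf δγ + normW1p p δy := rfl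
  have hbc0 : (0:ℝ) < 1 + bet * CA := by nlinarith [mul_pos hbet hCA]
  have hN0 : 0 ≤ N := by
    rw [hN']
    have h1 := mul_nonneg (mul_nonneg hbc0.le hV0) (normW1inf_nonneg δγ)
    linarith [normW1p_nonneg p δy]
  -- gradient memberships
  have hgradsum : MemLp (yb.add v).grad (ENNReal.ofReal p) μO := by
    have : (yb.add v).grad = fun x => yb.grad x + v.grad x := rfl
    rw [this]
    exact (hybW.2.2).add hv.2.2
  have hgsum_norm : (eLpNorm (yb.add v).grad (ENNReal.ofReal p) μO).toReal ≤ (1 + bet * CA) * V := by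
    have h1 : eLpNorm (yb.add v).grad (ENNReal.ofReal p) μO ≤
        eLpNorm yb.grad (ENNReal.ofReal p) μO + eLpNorm v.grad (ENNReal.ofReal p) μO := by
      have h2 : (yb.add v).grad = fun x => yb.grad x + v.grad x := rfl
      rw [h2]
      exact eLpNorm_add_le hybW.2.2.aestronglyMeasurable hv.2.2.aestronglyMeasurable
        (by rwa [ENNReal.one_le_ofReal])
    have h3 : (eLpNorm (yb.add v).grad (ENNReal.ofReal p) μO).toReal ≤
        (eLpNorm yb.grad (ENNReal.ofReal p) μO).toReal +
        (eLpNorm v.grad (ENNReal.ofReal p) μO).toReal := by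
      rw [← ENNReal.toReal_add hybW.2.2.eLpNorm_ne_top hv.2.2.eLpNorm_ne_top]
      exact ENNReal.toReal_mono (ENNReal.add_ne_top.mpr
        ⟨hybW.2.2.eLpNorm_ne_top, hv.2.2.eLpNorm_ne_top⟩) h1
    have h4 : (eLpNorm yb.grad (ENNReal.ofReal p) μO).toReal ≤ normW1p p yb :=
      le_add_of_nonneg_left ENNReal.toReal_nonneg
    have h5 : (eLpNorm v.grad (ENNReal.ofReal p) μO).toReal ≤ V :=
      le_add_of_nonneg_left ENNReal.toReal_nonneg
    have h6 : normW1p p yb ≤ bet * CA * V := hybnorm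
    nlinarith
  -- integrability and bounds for the bilinear forms
  have hIA : ∀ G H : ℝ × ℝ → ℝ × ℝ, MemLp G (ENNReal.ofReal p) μO →
      MemLp H (ENNReal.ofReal q) μO →
      IntegrableOn (fun x => dot2 (matVec (Amat γb x) (G x)) (H x)) USq ∧
      |∫ x in USq, dot2 (matVec (Amat γb x) (G x)) (H x)| ≤
        CA * (eLpNorm G (ENNReal.ofReal p) μO).toReal *
          (eLpNorm H (ENNReal.ofReal q) μO).toReal := by
    intro G H hG hH
    refine holder_dot2 (by linarith : 1 < p) hq0 hpq G H (Amat γb) CA (le_of_lt hCA) hG hH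
      (aesm_integrand_A γb hγbW.1 G H hG.aestronglyMeasurable hH.aestronglyMeasurable) ?_
    exact (sumAbs_Amat_ae γb hγbW.1 hγbd1).mono fun x hx => le_trans hx (by linarith)
  have hIDA : ∀ h : SobI, MemW1inf0 h → ∀ G H : ℝ × ℝ → ℝ × ℝ,
      MemLp G (ENNReal.ofReal p) μO → MemLp H (ENNReal.ofReal q) μO →
      IntegrableOn (fun x => dot2 (matVec (DAmat γb h x) (G x)) (H x)) USq ∧
      |∫ x in USq, dot2 (matVec (DAmat γb h x) (G x)) (H x)| ≤
        (CA * normW1inf h) * (eLpNorm G (ENNReal.ofReal p) μO).toReal *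
          (eLpNorm H (ENNReal.ofReal q) μO).toReal := by
    intro h hh G H hG hH
    refine holder_dot2 (by linarith : 1 < p) hq0 hpq G H (DAmat γb h) (CA * normW1inf h)
      (mul_nonneg (le_of_lt hCA) (normW1inf_nonneg h)) hG hH
      (aesm_integrand_DA γb hγbW.1 h hh.1 G H hG.aestronglyMeasurable hH.aestronglyMeasurable) ?_
    refine (sumAbs_DAmat_ae γb hγbW.1 hγbd1 h hh.1 (normW1inf h) (normW1inf_nonneg h)
      (dval_ae_bound h hh)).mono fun x hx => le_trans hx ?_
    exact mul_le_mul_of_nonneg_right (by linarith) (normW1inf_nonneg h)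
  -- the subtracted boundary equation
  have hEqB : ∀ ζ : SobI, MemW110 ζ → BGam κ δγh ζ =
      -(BOm δy (Ext ζ) (Amat γb) + BOm (yb.add v) (Ext ζ) (DAmat γb δγ)) := by
    intro ζ hζ
    have hw := hExt ζ hζ
    have hwgrad : MemLp (Ext ζ).grad (ENNReal.ofReal q) μO := hw.1.2.2
    have hint : ∀ g : SobI, MemW1inf0 g → Integrable (fun t => g.dval t * ζ.dval t) μI := by
      intro g hg
      refine Integrable.bdd_mul (c := normW1inf g) hζ.1 hg.1.1.aestronglyMeasurable ?_
      exact (dval_ae_bound g hg).mono fun t ht => by rwa [Real.norm_eq_abs]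
    have hBsub : BGam κ δγh ζ = BGam κ γh₁ ζ - BGam κ γh₂ ζ := by
      simp only [BGam]
      rw [show (∫ t in UI, δγh.dval t * ζ.dval t) =
          ∫ t in UI, (γh₁.dval t * ζ.dval t - γh₂.dval t * ζ.dval t) from
        integral_congr_ae (ae_of_all _ fun t => by
          show (γh₁.dval t - γh₂.dval t) * ζ.dval t = _; ring)]
      rw [integral_sub (hint γh₁ hγh₁) (hint γh₂ hγh₂)]
      ring
    have hOmsub : BOm δy (Ext ζ) (Amat γb) =
        BOm y₁ (Ext ζ) (Amat γb) - BOm y₂ (Ext ζ) (Amat γb) := by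
      simp only [BOm]
      rw [← integral_sub (hIA y₁.grad (Ext ζ).grad hy₁.2.2 hwgrad).1
        (hIA y₂.grad (Ext ζ).grad hy₂.2.2 hwgrad).1]
      refine integral_congr_ae (ae_of_all _ fun x => ?_)
      show dot2 (matVec _ (y₁.grad x - y₂.grad x)) _ = _
      simp only [dot2, matVec, Prod.fst_sub, Prod.snd_sub]
      ring
    have hDAlin : ∀ (x : ℝ × ℝ) (i j : Fin 2), DAmat γb δγ x i j =
        DAmat γb γ₁ x i j - DAmat γb γ₂ x i j := by
      intro x i j
      show A1mat γb x i j * (γ₁.val x.1 - γ₂.val x.1) +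
        A2mat γb x i j * (γ₁.dval x.1 - γ₂.dval x.1) = _
      simp only [DAmat]
      ring
    have hDAsub : BOm (yb.add v) (Ext ζ) (DAmat γb δγ) =
        BOm (yb.add v) (Ext ζ) (DAmat γb γ₁) - BOm (yb.add v) (Ext ζ) (DAmat γb γ₂) := by
      simp only [BOm]
      rw [← integral_sub (hIDA γ₁ hγ₁ _ _ hgradsum hwgrad).1
        (hIDA γ₂ hγ₂ _ _ hgradsum hwgrad).1]
      refine integral_congr_ae (ae_of_all _ fun x => ?_)
      simp only [dot2, matVec]
      rw [hDAlin x 0 0, hDAlin x 0 1, hDAlin x 1 0, hDAlin x 1 1]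
      ring
    have e1 := hT11 ζ hζ
    have e2 := hT12 ζ hζ
    simp only [DOm] at e1 e2
    rw [hBsub, hOmsub, hDAsub, e1, e2]
    ring
  -- the subtracted interior equation
  have hEqO : ∀ z : SobO, MemW1p0 q z →
      BOm δyh z (Amat γb) = -(BOm (yb.add v) z (DAmat γb δγh)) := by
    intro z hz
    have hzg : MemLp z.grad (ENNReal.ofReal q) μO := hz.2.2
    have hOmsub : BOm δyh z (Amat γb) = BOm yh₁ z (Amat γb) - BOm yh₂ z (Amat γb) := by
      simp only [BOm]
      rw [← integral_sub (hIA yh₁.grad z.grad hyh₁.2.2 hzg).1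
        (hIA yh₂.grad z.grad hyh₂.2.2 hzg).1]
      refine integral_congr_ae (ae_of_all _ fun x => ?_)
      show dot2 (matVec _ (yh₁.grad x - yh₂.grad x)) _ = _
      simp only [dot2, matVec, Prod.fst_sub, Prod.snd_sub]
      ring
    have hDAlin : ∀ (x : ℝ × ℝ) (i j : Fin 2), DAmat γb δγh x i j =
        DAmat γb γh₁ x i j - DAmat γb γh₂ x i j := by
      intro x i j
      show A1mat γb x i j * (γh₁.val x.1 - γh₂.val x.1) +
        A2mat γb x i j * (γh₁.dval x.1 - γh₂.dval x.1) = _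
      simp only [DAmat]
      ring
    have hDAsub : BOm (yb.add v) z (DAmat γb δγh) =
        BOm (yb.add v) z (DAmat γb γh₁) - BOm (yb.add v) z (DAmat γb γh₂) := by
      simp only [BOm]
      rw [← integral_sub (hIDA γh₁ hγh₁ _ _ hgradsum hzg).1
        (hIDA γh₂ hγh₂ _ _ hgradsum hzg).1]
      refine integral_congr_ae (ae_of_all _ fun x => ?_)
      simp only [dot2, matVec]
      rw [hDAlin x 0 0, hDAlin x 0 1, hDAlin x 1 0, hDAlin x 1 1]
      ring
    have e1 := hT21 z hz
    have e2 := hT22 z hz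
    rw [hOmsub, hDAsub, e1, e2]
    ring
  -- Step A: boundary estimate
  have hstepA : normW1inf δγh ≤ alp * (CA * CE * N) := by
    refine le_trans (hInfSupGam δγh hδγh) (mul_le_mul_of_nonneg_left ?_ (le_of_lt halp))
    refine Real.sSup_le ?_ ?_
    · rintro r ⟨ζ, hζ, hζn, rfl⟩
      have hζpos : 0 < normW11 ζ := lt_of_le_of_ne (normW11_nonneg ζ) (Ne.symm hζn)
      rw [div_le_iff₀ hζpos, hEqB ζ hζ]
      have hw := hExt ζ hζ
      have hwgrad : MemLp (Ext ζ).grad (ENNReal.ofReal q) μO := hw.1.2.2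
      have hwnorm : (eLpNorm (Ext ζ).grad (ENNReal.ofReal q) μO).toReal ≤ CE * normW11 ζ :=
        le_trans (le_add_of_nonneg_left ENNReal.toReal_nonneg) hw.2.2.2
      have hwg0 : 0 ≤ (eLpNorm (Ext ζ).grad (ENNReal.ofReal q) μO).toReal :=
        ENNReal.toReal_nonneg
      have hb1 := (hIA δy.grad (Ext ζ).grad hδy.2.2 hwgrad).2
      have hb2 := (hIDA δγ hδγ (yb.add v).grad (Ext ζ).grad hgradsum hwgrad).2
      have c1 : |BOm δy (Ext ζ) (Amat γb)| ≤ CA * normW1p p δy * (CE * normW11 ζ) := by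
        refine le_trans hb1 ?_
        have hg1 : (eLpNorm δy.grad (ENNReal.ofReal p) μO).toReal ≤ normW1p p δy :=
          le_add_of_nonneg_left ENNReal.toReal_nonneg
        have := mul_le_mul (mul_le_mul_of_nonneg_left hg1 (le_of_lt hCA)) hwnorm hwg0
          (mul_nonneg (le_of_lt hCA) (normW1p_nonneg _ _))
        linarith
      have c2 : |BOm (yb.add v) (Ext ζ) (DAmat γb δγ)| ≤
          (CA * normW1inf δγ) * ((1 + bet * CA) * V) * (CE * normW11 ζ) := by
        refine le_trans hb2 ?_
        have hCAg0 : 0 ≤ CA * normW1inf δγ :=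
          mul_nonneg (le_of_lt hCA) (normW1inf_nonneg δγ)
        have := mul_le_mul (mul_le_mul_of_nonneg_left hgsum_norm hCAg0) hwnorm hwg0
          (mul_nonneg hCAg0 (by nlinarith))
        linarith
      have habs : -(BOm δy (Ext ζ) (Amat γb) + BOm (yb.add v) (Ext ζ) (DAmat γb δγ)) ≤
          |BOm δy (Ext ζ) (Amat γb)| + |BOm (yb.add v) (Ext ζ) (DAmat γb δγ)| :=
        le_trans (neg_le_abs _) (abs_add_le _ _)
      have hfin : CA * normW1p p δy * (CE * normW11 ζ) +
          (CA * normW1inf δγ) * ((1 + bet * CA) * V) * (CE * normW11 ζ) =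
          CA * CE * N * normW11 ζ := by
        rw [hN']; ring
      linarith
    · have : (0:ℝ) ≤ CA * CE := mul_nonneg (le_of_lt hCA) (le_of_lt hCE0)
      nlinarith
  -- Step B: interior estimate
  have hstepB : normW1p p δyh ≤ bet * (CA * normW1inf δγh * ((1 + bet * CA) * V)) := by
    refine le_trans (hInfSupOm γb hγbW hγbState δyh hδyh)
      (mul_le_mul_of_nonneg_left ?_ (le_of_lt hbet))
    refine Real.sSup_le ?_ ?_
    · rintro r ⟨z, hz, hzn, rfl⟩
      have hzpos : 0 < normW1p q z := lt_of_le_of_ne (normW1p_nonneg q z) (Ne.symm hzn)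
      rw [div_le_iff₀ hzpos, hEqO z hz]
      have hzg : MemLp z.grad (ENNReal.ofReal q) μO := hz.2.2
      have hb2 := (hIDA δγh hδγh (yb.add v).grad z.grad hgradsum hzg).2
      have hzg1 : (eLpNorm z.grad (ENNReal.ofReal q) μO).toReal ≤ normW1p q z :=
        le_add_of_nonneg_left ENNReal.toReal_nonneg
      have hzg0 : 0 ≤ (eLpNorm z.grad (ENNReal.ofReal q) μO).toReal := ENNReal.toReal_nonneg
      have hCAg0 : 0 ≤ CA * normW1inf δγh :=
        mul_nonneg (le_of_lt hCA) (normW1inf_nonneg δγh)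
      have c2 : |BOm (yb.add v) z (DAmat γb δγh)| ≤
          (CA * normW1inf δγh) * ((1 + bet * CA) * V) * normW1p q z := by
        refine le_trans hb2 ?_
        have := mul_le_mul (mul_le_mul_of_nonneg_left hgsum_norm hCAg0) hzg1 hzg0
          (mul_nonneg hCAg0 (by nlinarith))
        linarith
      have habs : -(BOm (yb.add v) z (DAmat γb δγh)) ≤ |BOm (yb.add v) z (DAmat γb δγh)| :=
        neg_le_abs _
      calc -(BOm (yb.add v) z (DAmat γb δγh)) ≤
          (CA * normW1inf δγh) * ((1 + bet * CA) * V) * normW1p q z := le_trans habs c2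
        _ = CA * normW1inf δγh * ((1 + bet * CA) * V) * normW1p q z := by ring
    · have h0 : 0 ≤ CA * normW1inf δγh :=
        mul_nonneg (le_of_lt hCA) (normW1inf_nonneg δγh)
      exact mul_nonneg h0 (mul_nonneg hbc0.le hV0)
  -- combine
  have key0 : alp * CE * CA * (1 + bet * CA)^2 * V ≤ 1 - θ₂ := by
    have hD : (0:ℝ) < alp * CE * CA * (1 + bet * CA)^2 := by positivity
    have := (le_div_iff₀ hD).mp hv2
    linarith
  have ha0 : 0 ≤ normW1inf δγh := normW1inf_nonneg _
  have hgoal : normW1 bet CA p v δγh δyh =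
      (1 + bet * CA) * V * normW1inf δγh + normW1p p δyh := rfl
  rw [hgoal]
  calc (1 + bet * CA) * V * normW1inf δγh + normW1p p δyh
      ≤ (1 + bet * CA) * V * normW1inf δγh +
        bet * (CA * normW1inf δγh * ((1 + bet * CA) * V)) := by linarith [hstepB]
    _ = (1 + bet * CA)^2 * V * normW1inf δγh := by ring
    _ ≤ (1 + bet * CA)^2 * V * (alp * (CA * CE * N)) := by
        refine mul_le_mul_of_nonneg_left hstepA ?_
        positivity
    _ = (alp * CE * CA * (1 + bet * CA)^2 * V) * N := by ring
    _ ≤ (1 - θ₂) * N := mul_le_mul_of_nonneg_right key0 hN0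
end
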